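/- arXiv:2307.08642 — 11 statements merged into one kernel-verified Lean document; each statement's English description precedes it below -/
import Mathlib

section
/- Let n ≥ 1, let a ∈ ℂⁿ, let f be a nonzero homogeneous polynomial in n complex variables, let U ⊆ ℂⁿ be open, and let λ be differentiable on U with f(x − λ(x)·a) = 0 for all x ∈ U. Then for every x ∈ U such that Df(x − λ(x)·a) ≠ 0, one has Df(x − λ(x)·a)(a) ≠ 0 and the derivative of λ at x is given by Dλ(x)(v) = Df(x − λ(x)·a)(v) / Df(x − λ(x)·a)(a) for every v ∈ ℂⁿ. (Proposition 8.3(1) of the paper: the formula dλ = df(x − λa)/⟨df(x − λa), a⟩.) -/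
/-!
Differentiating the identity `F (y - λ y • a) = 0` at `x` by the chain rule gives
`DF(p) v = Dλ(x) v · DF(p) a` for all `v`, where `p = x - λ x • a`. Hence `DF(p) a = 0` would
force `DF(p) = 0`, and otherwise dividing by `DF(p) a` yields the formula for `Dλ(x)`.
-/

open Filter Topology

section ImplicitRoot

variable {𝕜 E : Type*} [NontriviallyNormedField 𝕜] [NormedAddCommGroup E] [NormedSpace 𝕜 E]
  {F lam : E → 𝕜} {a x : E}

theorem fderiv_apply_eq_mul_of_eventually_eq_zero_sub_smul
    (hF : DifferentiableAt 𝕜 F (x - lam x • a)) (hlam : DifferentiableAt 𝕜 lam x)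
    (hzero : ∀ᶠ y in 𝓝 x, F (y - lam y • a) = 0) (v : E) :
    fderiv 𝕜 F (x - lam x • a) v = fderiv 𝕜 lam x v * fderiv 𝕜 F (x - lam x • a) a := by
  have hcomp : HasFDerivAt (fun y => F (y - lam y • a))
      ((fderiv 𝕜 F (x - lam x • a)).comp
        (ContinuousLinearMap.id 𝕜 E - (fderiv 𝕜 lam x).smulRight a)) x :=
    hF.hasFDerivAt.comp x ((hasFDerivAt_id x).sub (hlam.hasFDerivAt.smul_const a))
  have hconst : HasFDerivAt (fun y => F (y - lam y • a)) (0 : E →L[𝕜] 𝕜) x :=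
    (hasFDerivAt_const 0 x).congr_of_eventuallyEq hzero
  have h := congrArg (fun T : E →L[𝕜] 𝕜 => T v) (hcomp.unique hconst)
  simp only [ContinuousLinearMap.comp_apply, sub_apply,
    ContinuousLinearMap.id_apply, ContinuousLinearMap.smulRight_apply,
    zero_apply, map_sub, map_smul, smul_eq_mul] at h
  linear_combination h

theorem fderiv_eq_div_of_eventually_eq_zero_sub_smul
    (hF : DifferentiableAt 𝕜 F (x - lam x • a)) (hlam : DifferentiableAt 𝕜 lam x)
    (hzero : ∀ᶠ y in 𝓝 x, F (y - lam y • a) = 0) (hDF : fderiv 𝕜 F (x - lam x • a) ≠ 0) :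
    fderiv 𝕜 F (x - lam x • a) a ≠ 0 ∧
      ∀ v, fderiv 𝕜 lam x v = fderiv 𝕜 F (x - lam x • a) v / fderiv 𝕜 F (x - lam x • a) a := by
  have hchain := fderiv_apply_eq_mul_of_eventually_eq_zero_sub_smul hF hlam hzero
  have hDFa : fderiv 𝕜 F (x - lam x • a) a ≠ 0 := by
    refine fun h0 => hDF (ContinuousLinearMap.ext fun v => ?_)
    rw [hchain v, h0, mul_zero, zero_apply]
  refine ⟨hDFa, fun v => ?_⟩
  rw [hchain v, mul_div_cancel_right₀ _ hDFa]

end ImplicitRoot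

theorem stmt_0_general (n : ℕ) (a : Fin n → ℂ)
    (f : MvPolynomial (Fin n) ℂ)
    (U : Set (Fin n → ℂ)) (hU : IsOpen U)
    (lam : (Fin n → ℂ) → ℂ)
    (hdiff : ∀ x ∈ U, DifferentiableAt ℂ lam x)
    (hroot : ∀ x ∈ U, MvPolynomial.eval (x - lam x • a) f = 0) :
    ∀ x ∈ U,
      fderiv ℂ (fun y => MvPolynomial.eval y f) (x - lam x • a) ≠ 0 →
      (fderiv ℂ (fun y => MvPolynomial.eval y f) (x - lam x • a) a ≠ 0 ∧
       ∀ v : Fin n → ℂ,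
         fderiv ℂ lam x v =
           fderiv ℂ (fun y => MvPolynomial.eval y f) (x - lam x • a) v /
           fderiv ℂ (fun y => MvPolynomial.eval y f) (x - lam x • a) a) := fun x hx =>
  fderiv_eq_div_of_eventually_eq_zero_sub_smul
    ((AnalyticOnNhd.eval_mvPolynomial f _ trivial).differentiableAt) (hdiff x hx)
    (eventually_of_mem (hU.mem_nhds hx) (hroot ·))

/-- Proposition 8.3(1): the formula `dλ = df(x − λa)/⟨df(x − λa), a⟩` for a root
`λ(x)` of `f(x − λ(x)a) = 0`, where `f` is a nonzero homogeneous polynomial. -/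
theorem stmt_0 (n : ℕ) (hn : 1 ≤ n) (a : Fin n → ℂ)
    (f : MvPolynomial (Fin n) ℂ) (hf : f ≠ 0) (d : ℕ)
    (hhom : f.IsHomogeneous d)
    (U : Set (Fin n → ℂ)) (hU : IsOpen U)
    (lam : (Fin n → ℂ) → ℂ)
    (hdiff : ∀ x ∈ U, DifferentiableAt ℂ lam x)
    (hroot : ∀ x ∈ U, MvPolynomial.eval (x - lam x • a) f = 0) :
    ∀ x ∈ U,
      fderiv ℂ (fun y => MvPolynomial.eval y f) (x - lam x • a) ≠ 0 →
      (fderiv ℂ (fun y => MvPolynomial.eval y f) (x - lam x • a) a ≠ 0 ∧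
       ∀ v : Fin n → ℂ,
         fderiv ℂ lam x v =
           fderiv ℂ (fun y => MvPolynomial.eval y f) (x - lam x • a) v /
           fderiv ℂ (fun y => MvPolynomial.eval y f) (x - lam x • a) a) :=
  stmt_0_general n a f U hU lam hdiff hroot
end

section
/- Let n ≥ 1, let a ∈ ℂⁿ, let f₁ and f₂ be nonzero homogeneous polynomials in n complex variables, let U ⊆ ℂⁿ be open, and let λ₁, λ₂ be differentiable on U with f₁(x − λ₁(x)·a) = 0 and f₂(x − λ₂(x)·a) = 0 for all x ∈ U. If at some point x₀ ∈ U the differentials are linearly dependent, i.e. Dλ₂(x₀) = c·Dλ₁(x₀) for some c ∈ ℂ, then they coincide: Dλ₂(x₀) = Dλ₁(x₀) (equivalently c = 1). (Proposition 8.2 of the paper: linearly dependent differentials of two eigenvalues of a Lie–Poisson pencil coincide.) -/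
/-!
An eigenvalue `λ` moves by `t` when `x` moves by `t • a`: for fixed `x`, the function
`t ↦ λ(x + t a) - t` is continuous and takes values among the roots of the one-variable
polynomial `s ↦ f(x - s a)`, so it is constant on segments as soon as this polynomial is nonzero,
e.g. when `f(x) ≠ 0`. Such `x` are dense, so by continuity `λ(x + t a) = λ(x) + t` near any point
of `U`, whence `Dλ(x₀) a = 1` for every eigenvalue. Applying `Dλ₂(x₀) = c • Dλ₁(x₀)` to `a`
gives `c = 1`.
-/

open Topology Filter Metric Set

namespace MvPolynomial

variable {R : Type*} [CommRing R] {ι : Type*}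

noncomputable def restrictToLine (f : MvPolynomial ι R) (x v : ι → R) : Polynomial R :=
  eval₂ Polynomial.C (fun i => Polynomial.C (x i) + Polynomial.X * Polynomial.C (v i)) f

theorem eval_restrictToLine (f : MvPolynomial ι R) (x v : ι → R) (t : R) :
    (restrictToLine f x v).eval t = eval (x + t • v) f := by
  rw [restrictToLine, ← Polynomial.coe_evalRingHom, eval₂_comp_left, ← eval₂_id]
  congr 1
  · ext r; simp
  · funext i; simp [mul_comm t]

theorem dense_setOf_eval_ne_zero {𝕜 : Type*} [NontriviallyNormedField 𝕜] [Fintype ι]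
    {f : MvPolynomial ι 𝕜} (hf : f ≠ 0) : Dense {x : ι → 𝕜 | eval x f ≠ 0} := by
  rw [dense_iff_inter_open]
  rintro U hU ⟨y, hy⟩
  by_contra hempty
  obtain ⟨ε, hε, hball⟩ := Metric.isOpen_iff.mp hU y hy
  refine hf (funext_set (fun i => ball (y i) ε)
    (fun i => infinite_of_mem_nhds (y i) (ball_mem_nhds _ hε)) fun x hx => ?_)
  rw [← ball_pi y hε] at hx
  by_contra hne
  exact hempty ⟨x, hball hx, by simpa using hne⟩

end MvPolynomial

open MvPolynomial

variable {ι : Type*} {f : MvPolynomial ι ℂ} {a : ι → ℂ} {lam : (ι → ℂ) → ℂ}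
  {V : Set (ι → ℂ)}

def IsPencilEigenvalueOn (f : MvPolynomial ι ℂ) (a : ι → ℂ) (lam : (ι → ℂ) → ℂ)
    (V : Set (ι → ℂ)) : Prop :=
  ∀ x ∈ V, eval (x - lam x • a) f = 0

namespace IsPencilEigenvalueOn

theorem add_smul_eq_of_eval_ne_zero (h : IsPencilEigenvalueOn f a lam V) (hV : Convex ℝ V)
    (hcont : ContinuousOn lam V) {x : ι → ℂ} (hx : x ∈ V) (hfx : eval x f ≠ 0) {t : ℂ}
    (ht : x + t • a ∈ V) : lam (x + t • a) = lam x + t := by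
  set P := restrictToLine f x (-a)
  have hP : ∀ s, P.eval s = eval (x - s • a) f := fun s => by
    rw [eval_restrictToLine, smul_neg, ← sub_eq_add_neg]
  have hP0 : P ≠ 0 := fun h0 => hfx (by simpa [h0] using (hP 0).symm)
  have hline : MapsTo (fun s : ℂ => x + s • a) (segment ℝ 0 t) V := by
    rw [segment_eq_image]
    rintro _ ⟨θ, hθ, rfl⟩
    simp only [smul_zero, zero_add, smul_assoc]
    exact hV.add_smul_mem hx ht hθ
  have hroots : MapsTo (fun s => lam (x + s • a) - s) (segment ℝ 0 t) {s | P.IsRoot s} := by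
    intro s hs
    have harg : x - (lam (x + s • a) - s) • a = x + s • a - lam (x + s • a) • a := by
      rw [sub_smul]; abel
    simpa [Polynomial.IsRoot, hP, harg] using h _ (hline hs)
  have hconst : lam (x + (0 : ℂ) • a) - 0 = lam (x + t • a) - t :=
    (convex_segment (0 : ℂ) t).isPreconnected.constant_of_mapsTo
    (Polynomial.finite_setOfPred_isRoot hP0).isDiscrete
    ((hcont.comp (by fun_prop) hline).sub continuousOn_id) hroots
    (left_mem_segment ℝ 0 t) (right_mem_segment ℝ 0 t)
  simp only [zero_smul, add_zero, sub_zero] at hconst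
  linear_combination -hconst

theorem add_smul_eq [Fintype ι] (h : IsPencilEigenvalueOn f a lam V) (hf : f ≠ 0) (hVo : IsOpen V)
    (hV : Convex ℝ V) (hcont : ContinuousOn lam V) {x : ι → ℂ} (hx : x ∈ V) {t : ℂ}
    (ht : x + t • a ∈ V) : lam (x + t • a) = lam x + t := by
  set O := V ∩ (· + t • a) ⁻¹' V
  have hO : IsOpen O := hVo.inter (hVo.preimage (by fun_prop))
  have hcontO : ContinuousOn lam O := hcont.mono inter_subset_left
  have hcontO' : ContinuousOn (fun y => lam (y + t • a)) O :=
    hcont.comp (by fun_prop) fun _ hy => hy.2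
  refine Set.EqOn.of_subset_closure (s := O ∩ {y | eval y f ≠ 0})
    (fun y hy => h.add_smul_eq_of_eval_ne_zero hV hcont hy.1.1 hy.2 hy.1.2)
    hcontO' (hcontO.add continuousOn_const) inter_subset_left
    ((dense_setOf_eval_ne_zero hf).open_subset_closure_inter hO) ⟨hx, ht⟩

theorem fderiv_apply_eq_one [Fintype ι] (h : IsPencilEigenvalueOn f a lam V) (hf : f ≠ 0) (hVo : IsOpen V)
    (hd : ∀ x ∈ V, DifferentiableAt ℂ lam x) {x₀ : ι → ℂ} (hx₀ : x₀ ∈ V) :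
    fderiv ℂ lam x₀ a = 1 := by
  obtain ⟨ε, hε, hball⟩ := Metric.isOpen_iff.mp hVo x₀ hx₀
  have hB : IsPencilEigenvalueOn f a lam (ball x₀ ε) := fun x hx => h x (hball hx)
  have hcont : ContinuousOn lam (ball x₀ ε) :=
    fun x hx => (hd x (hball hx)).continuousAt.continuousWithinAt
  have hline : HasDerivAt (fun t : ℂ => x₀ + t • a) a 0 := by
    simpa using ((hasDerivAt_id (0 : ℂ)).smul_const a).const_add x₀
  have hderiv : HasDerivAt (fun t : ℂ => lam (x₀ + t • a)) (fderiv ℂ lam x₀ a) 0 := by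
    refine HasFDerivAt.comp_hasDerivAt (f := fun t : ℂ => x₀ + t • a) 0 ?_ hline
    simpa using (hd x₀ hx₀).hasFDerivAt
  have hnear : ∀ᶠ t in 𝓝 (0 : ℂ), x₀ + t • a ∈ ball x₀ ε :=
    hline.continuousAt.preimage_mem_nhds (by simpa using ball_mem_nhds x₀ hε)
  have hderiv' : HasDerivAt (fun t : ℂ => lam (x₀ + t • a)) 1 0 := by
    refine ((hasDerivAt_id (0 : ℂ)).const_add (lam x₀)).congr_of_eventuallyEq ?_
    filter_upwards [hnear] with t ht
    exact hB.add_smul_eq hf isOpen_ball (convex_ball x₀ ε) hcont (mem_ball_self hε) ht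
  exact hderiv.unique hderiv'

end IsPencilEigenvalueOn

theorem stmt_2_general (n : ℕ) (a : Fin n → ℂ)
    (f₁ f₂ : MvPolynomial (Fin n) ℂ) (hf₁ : f₁ ≠ 0) (hf₂ : f₂ ≠ 0)
    (U : Set (Fin n → ℂ)) (hU : IsOpen U)
    (lam₁ lam₂ : (Fin n → ℂ) → ℂ)
    (hd₁ : ∀ x ∈ U, DifferentiableAt ℂ lam₁ x)
    (hd₂ : ∀ x ∈ U, DifferentiableAt ℂ lam₂ x)
    (hr₁ : ∀ x ∈ U, MvPolynomial.eval (x - lam₁ x • a) f₁ = 0)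
    (hr₂ : ∀ x ∈ U, MvPolynomial.eval (x - lam₂ x • a) f₂ = 0)
    (x₀ : Fin n → ℂ) (hx₀ : x₀ ∈ U)
    (c : ℂ) (hc : fderiv ℂ lam₂ x₀ = c • fderiv ℂ lam₁ x₀) :
    fderiv ℂ lam₂ x₀ = fderiv ℂ lam₁ x₀ := by
  have hca : fderiv ℂ lam₂ x₀ a = c * fderiv ℂ lam₁ x₀ a := by rw [hc]; rfl
  rw [IsPencilEigenvalueOn.fderiv_apply_eq_one hr₁ hf₁ hU hd₁ hx₀,
    IsPencilEigenvalueOn.fderiv_apply_eq_one hr₂ hf₂ hU hd₂ hx₀, mul_one] at hca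
  rw [hc, ← hca, one_smul]

/-- Proposition 8.2: if the differentials of two eigenvalues (roots of shifted
homogeneous polynomials) are linearly dependent at a point, then they coincide. -/
theorem stmt_2 (n : ℕ) (hn : 1 ≤ n) (a : Fin n → ℂ)
    (f₁ f₂ : MvPolynomial (Fin n) ℂ) (hf₁ : f₁ ≠ 0) (hf₂ : f₂ ≠ 0)
    (d₁ d₂ : ℕ) (hh₁ : f₁.IsHomogeneous d₁) (hh₂ : f₂.IsHomogeneous d₂)
    (U : Set (Fin n → ℂ)) (hU : IsOpen U)
    (lam₁ lam₂ : (Fin n → ℂ) → ℂ)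
    (hd₁ : ∀ x ∈ U, DifferentiableAt ℂ lam₁ x)
    (hd₂ : ∀ x ∈ U, DifferentiableAt ℂ lam₂ x)
    (hr₁ : ∀ x ∈ U, MvPolynomial.eval (x - lam₁ x • a) f₁ = 0)
    (hr₂ : ∀ x ∈ U, MvPolynomial.eval (x - lam₂ x • a) f₂ = 0)
    (x₀ : Fin n → ℂ) (hx₀ : x₀ ∈ U)
    (c : ℂ) (hc : fderiv ℂ lam₂ x₀ = c • fderiv ℂ lam₁ x₀) :
    fderiv ℂ lam₂ x₀ = fderiv ℂ lam₁ x₀ :=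
  stmt_2_general n a f₁ f₂ hf₁ hf₂ U hU lam₁ lam₂ hd₁ hd₂ hr₁ hr₂ x₀ hx₀ c hc
end

section
/- Let n ≥ 1, let f be a nonzero homogeneous polynomial in n complex variables, let U ⊆ ℂⁿ × ℂⁿ be open, and let λ : U → ℂ be ℂ-differentiable with f(x − λ(x,a)·a) = 0 for all (x,a) ∈ U. Then for every (x,a) ∈ U with Df(x − λ(x,a)·a) ≠ 0, the derivative of λ at (x,a) evaluated on the direction (0, a) equals −λ(x,a), i.e. Dλ(x,a)(0, a) = −λ(x,a). (The identity ⟨d_a λ, a⟩ = −λ, Eq. (55) in the second proof of Proposition 8.4 of the paper.) -/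
/-!
Differentiating the identity `f (x - λ(x,a) • a) = 0` at `(x,a)` gives, with `L = Df(y)` at the
root `y = x - λ(x,a) • a`, the relation `L (v - λ • w) = Dλ(v,w) • L a` for every direction
`(v,w)`. The directions `(v,0)` show that `L a ≠ 0` as soon as `L ≠ 0`, and the direction `(0,a)`
gives `-λ • L a = Dλ(0,a) • L a`, whence `Dλ(0,a) = -λ`.
-/

open Filter Topology

section ImplicitRoot

variable {𝕜 E F : Type*} [NontriviallyNormedField 𝕜] [NormedAddCommGroup E] [NormedSpace 𝕜 E]
  [NormedAddCommGroup F] [NormedSpace 𝕜 F]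
  {g : E → F} {lam : E × E → 𝕜} {p : E × E} {L : E →L[𝕜] F}

theorem map_sub_smul_eq_fderiv_smul_of_eventually_eq_zero
    (hg : HasFDerivAt g L (p.1 - lam p • p.2)) (hlam : DifferentiableAt 𝕜 lam p)
    (hroot : ∀ᶠ q in 𝓝 p, g (q.1 - lam q • q.2) = 0) (v : E × E) :
    L (v.1 - lam p • v.2) = fderiv 𝕜 lam p v • L p.2 := by
  have hcomp := hg.comp p (hasFDerivAt_fst.sub (hlam.hasFDerivAt.smul hasFDerivAt_snd))
  have hzero := hcomp.unique ((hasFDerivAt_const (0 : F) p).congr_of_eventuallyEq hroot)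
  have hv := congrArg (fun T : E × E →L[𝕜] F => T v) hzero
  simp only [ContinuousLinearMap.comp_apply, sub_apply, add_apply, smul_apply, zero_apply,
    ContinuousLinearMap.smulRight_apply, ContinuousLinearMap.coe_fst',
    ContinuousLinearMap.coe_snd', map_sub, map_add, map_smul] at hv
  rw [map_sub, map_smul]
  exact sub_eq_zero.mp (by rw [← hv]; abel)

theorem map_snd_ne_zero_of_eventually_eq_zero
    (hg : HasFDerivAt g L (p.1 - lam p • p.2)) (hlam : DifferentiableAt 𝕜 lam p)
    (hroot : ∀ᶠ q in 𝓝 p, g (q.1 - lam q • q.2) = 0) (hL : L ≠ 0) :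
    L p.2 ≠ 0 := by
  intro hLa
  refine hL (ContinuousLinearMap.ext fun w => ?_)
  simpa [hLa] using map_sub_smul_eq_fderiv_smul_of_eventually_eq_zero hg hlam hroot (w, 0)

theorem fderiv_apply_zero_snd_eq_neg_of_eventually_eq_zero
    (hg : HasFDerivAt g L (p.1 - lam p • p.2)) (hlam : DifferentiableAt 𝕜 lam p)
    (hroot : ∀ᶠ q in 𝓝 p, g (q.1 - lam q • q.2) = 0) (hL : L ≠ 0) :
    fderiv 𝕜 lam p (0, p.2) = -lam p := by
  have h := map_sub_smul_eq_fderiv_smul_of_eventually_eq_zero hg hlam hroot (0, p.2)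
  rw [zero_sub, map_neg, map_smul, ← neg_smul, ← sub_eq_zero, ← sub_smul] at h
  have hLa : L p.2 ≠ 0 := map_snd_ne_zero_of_eventually_eq_zero hg hlam hroot hL
  exact (sub_eq_zero.mp ((smul_eq_zero.mp h).resolve_right hLa)).symm

end ImplicitRoot

theorem stmt_3_general (n : ℕ)
    (f : MvPolynomial (Fin n) ℂ)
    (U : Set ((Fin n → ℂ) × (Fin n → ℂ))) (hU : IsOpen U)
    (lam : (Fin n → ℂ) × (Fin n → ℂ) → ℂ)
    (hdiff : ∀ p ∈ U, DifferentiableAt ℂ lam p)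
    (hroot : ∀ p ∈ U, MvPolynomial.eval (p.1 - lam p • p.2) f = 0) :
    ∀ p ∈ U,
      fderiv ℂ (fun y => MvPolynomial.eval y f) (p.1 - lam p • p.2) ≠ 0 →
      fderiv ℂ lam p ((0 : Fin n → ℂ), p.2) = -lam p := by
  intro p hp hL
  have hg : DifferentiableAt ℂ (fun y => MvPolynomial.eval y f) (p.1 - lam p • p.2) :=
    (AnalyticOnNhd.eval_mvPolynomial f _ trivial).differentiableAt
  exact fderiv_apply_zero_snd_eq_neg_of_eventually_eq_zero hg.hasFDerivAt (hdiff p hp)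
    (eventually_of_mem (hU.mem_nhds hp) hroot) hL

/-- Eq. (55) in the second proof of Proposition 8.4: `⟨d_a λ, a⟩ = −λ` for a
differentiable root `λ(x,a)` of `f(x − λ(x,a)a) = 0`, at points where `Df ≠ 0`. -/
theorem stmt_3 (n : ℕ) (hn : 1 ≤ n)
    (f : MvPolynomial (Fin n) ℂ) (hf : f ≠ 0) (d : ℕ) (hh : f.IsHomogeneous d)
    (U : Set ((Fin n → ℂ) × (Fin n → ℂ))) (hU : IsOpen U)
    (lam : (Fin n → ℂ) × (Fin n → ℂ) → ℂ)
    (hdiff : ∀ p ∈ U, DifferentiableAt ℂ lam p)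
    (hroot : ∀ p ∈ U, MvPolynomial.eval (p.1 - lam p • p.2) f = 0) :
    ∀ p ∈ U,
      fderiv ℂ (fun y => MvPolynomial.eval y f) (p.1 - lam p • p.2) ≠ 0 →
      fderiv ℂ lam p ((0 : Fin n → ℂ), p.2) = -lam p :=
  stmt_3_general n f U hU lam hdiff hroot
end

section
/- Let 𝔤 be a finite-dimensional complex Lie algebra, let f : 𝔤* → ℂ be ℂ-differentiable and a semi-invariant with weight χ ∈ 𝔤*, meaning that for all y ∈ 𝔤* and all u ∈ 𝔤 one has y(⁅u, ∇f(y)⁆) = χ(u) · f(y). Let a ∈ 𝔤*, let U ⊆ 𝔤* be open and let λ : U → ℂ be ℂ-differentiable with f(x − λ(x)·a) = 0 for all x ∈ U. Then for every x ∈ U at which ∇f(x − λ(x)·a) ≠ 0 and for every η ∈ 𝔤: (x − λ(x)·a)(⁅∇λ(x), η⁆) = 0; equivalently x(⁅∇λ(x), η⁆) = λ(x) · a(⁅∇λ(x), η⁆). (Lemma 8.11 of the paper: {λ, g}_x = λ·{λ, g}_a for roots of shifted semi-invariants, at points where df(x − λa) ≠ 0.) -/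
/-!
Differentiating `f (x - λ x • a) = 0` gives `∇f(y) = Df(y)(a) · ∇λ(x)` at `y = x - λ(x) a`, and
`∇f(y) ≠ 0` forces `Df(y)(a) ≠ 0`. Since `f (y) = 0`, semi-invariance says that `y` kills
`⁅u, ∇f(y)⁆` for every `u`, hence also `⁅∇λ(x), η⁆ = -⁅η, ∇λ(x)⁆`.
-/

open Filter Topology

theorem fderiv_apply_eq_smul_of_comp_sub_smul_eventuallyEq_zero {𝕜 E F : Type*}
    [NontriviallyNormedField 𝕜] [NormedAddCommGroup E] [NormedSpace 𝕜 E]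
    [NormedAddCommGroup F] [NormedSpace 𝕜 F] {f : E → F} {lam : E → 𝕜} {a x : E}
    (hf : DifferentiableAt 𝕜 f (x - lam x • a)) (hlam : DifferentiableAt 𝕜 lam x)
    (hroot : (fun z => f (z - lam z • a)) =ᶠ[𝓝 x] 0) (ξ : E) :
    fderiv 𝕜 f (x - lam x • a) ξ = fderiv 𝕜 lam x ξ • fderiv 𝕜 f (x - lam x • a) a := by
  have hshift : HasFDerivAt (fun z => z - lam z • a)
      (ContinuousLinearMap.id 𝕜 E - (fderiv 𝕜 lam x).smulRight a) x :=
    (hasFDerivAt_id x).sub (hlam.hasFDerivAt.smul_const a)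
  have hcomp := hf.hasFDerivAt.comp x hshift
  have hzero : HasFDerivAt (fun z => f (z - lam z • a)) (0 : E →L[𝕜] F) x :=
    (hasFDerivAt_const 0 x).congr_of_eventuallyEq hroot
  have h := congrArg (· ξ) (hcomp.unique hzero)
  simpa [sub_eq_zero] using h

theorem stmt_5_general (n : ℕ)
    (br : (Fin n → ℂ) →ₗ[ℂ] (Fin n → ℂ) →ₗ[ℂ] (Fin n → ℂ))
    (halt : ∀ u, br u u = 0)
    (f : (Fin n → ℂ) → ℂ) (gradf : (Fin n → ℂ) → (Fin n → ℂ))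
    (hf : Differentiable ℂ f)
    (hgradf : ∀ y ξ : Fin n → ℂ, fderiv ℂ f y ξ = ∑ i, ξ i * gradf y i)
    (χ : Fin n → ℂ)
    (hsemi : ∀ y u : Fin n → ℂ,
      (∑ i, y i * br u (gradf y) i) = (∑ i, χ i * u i) * f y)
    (a : Fin n → ℂ) (U : Set (Fin n → ℂ)) (hU : IsOpen U)
    (lam : (Fin n → ℂ) → ℂ) (gradlam : (Fin n → ℂ) → (Fin n → ℂ))
    (hlam : ∀ x ∈ U, DifferentiableAt ℂ lam x)
    (hgradlam : ∀ x ∈ U, ∀ ξ : Fin n → ℂ,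
      fderiv ℂ lam x ξ = ∑ i, ξ i * gradlam x i)
    (hroot : ∀ x ∈ U, f (x - lam x • a) = 0) :
    ∀ x ∈ U, gradf (x - lam x • a) ≠ 0 →
      ∀ η : Fin n → ℂ,
        (∑ i, (x - lam x • a) i * br (gradlam x) η i) = 0 ∧
        (∑ i, x i * br (gradlam x) η i) =
          lam x * ∑ i, a i * br (gradlam x) η i := by
  intro x hx hne η
  set y := x - lam x • a
  set c := fderiv ℂ f y a
  have hgrad : gradf y = c • gradlam x := by
    refine dotProduct_eq _ _ fun ξ => ?_
    have h := fderiv_apply_eq_smul_of_comp_sub_smul_eventuallyEq_zero (hf y) (hlam x hx)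
      (eventually_of_mem (hU.mem_nhds hx) hroot) ξ
    rw [hgradf, hgradlam x hx] at h
    rw [dotProduct_comm, smul_dotProduct, dotProduct_comm (gradlam x)]
    exact h.trans (mul_comm _ _)
  have hc : c ≠ 0 := fun h => hne (by rw [hgrad, h, zero_smul])
  have hkill : y ⬝ᵥ br (gradlam x) η = 0 := by
    have h : y ⬝ᵥ br η (gradf y) = (χ ⬝ᵥ η) * f y := hsemi y η
    rw [hroot x hx, mul_zero, hgrad, map_smul, dotProduct_smul, smul_eq_mul,
      mul_eq_zero] at h
    rw [← LinearMap.IsAlt.neg halt, dotProduct_neg, h.resolve_left hc, neg_zero]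
  refine ⟨hkill, ?_⟩
  rw [sub_dotProduct, smul_dotProduct, smul_eq_mul] at hkill
  exact sub_eq_zero.mp hkill

/-- Lemma 8.11: let `𝔤` be a finite-dimensional complex Lie algebra, modeled in
coordinates as `ℂⁿ = Fin n → ℂ` with a bilinear bracket `br` satisfying the Lie
algebra axioms; its dual `𝔤*` is identified with `Fin n → ℂ` via the standard
pairing `⟨x, u⟩ = ∑ i, x i * u i`, and gradients `∇F(y) ∈ 𝔤` are specified by the
defining property `DF(y)(ξ) = ∑ i, ξ i * ∇F(y) i` (the canonical identification of
`𝔤` with its double dual).  If `f` is a differentiable semi-invariant with weight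
`χ ∈ 𝔤*`, i.e. `y(⁅u, ∇f(y)⁆) = χ(u)·f(y)` for all `y ∈ 𝔤*`, `u ∈ 𝔤`, and `λ` is a
differentiable root of `f(x − λ(x)·a) = 0` on an open set `U`, then at every
`x ∈ U` with `∇f(x − λ(x)a) ≠ 0` and for every `η ∈ 𝔤`:
`(x − λ(x)a)(⁅∇λ(x), η⁆) = 0`, equivalently
`x(⁅∇λ(x), η⁆) = λ(x)·a(⁅∇λ(x), η⁆)`. -/
theorem stmt_5 (n : ℕ)
    (br : (Fin n → ℂ) →ₗ[ℂ] (Fin n → ℂ) →ₗ[ℂ] (Fin n → ℂ))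
    (halt : ∀ u, br u u = 0)
    (hjac : ∀ u v w, br u (br v w) + br v (br w u) + br w (br u v) = 0)
    (f : (Fin n → ℂ) → ℂ) (gradf : (Fin n → ℂ) → (Fin n → ℂ))
    (hf : Differentiable ℂ f)
    (hgradf : ∀ y ξ : Fin n → ℂ, fderiv ℂ f y ξ = ∑ i, ξ i * gradf y i)
    (χ : Fin n → ℂ)
    (hsemi : ∀ y u : Fin n → ℂ,
      (∑ i, y i * br u (gradf y) i) = (∑ i, χ i * u i) * f y)
    (a : Fin n → ℂ) (U : Set (Fin n → ℂ)) (hU : IsOpen U)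
    (lam : (Fin n → ℂ) → ℂ) (gradlam : (Fin n → ℂ) → (Fin n → ℂ))
    (hlam : ∀ x ∈ U, DifferentiableAt ℂ lam x)
    (hgradlam : ∀ x ∈ U, ∀ ξ : Fin n → ℂ,
      fderiv ℂ lam x ξ = ∑ i, ξ i * gradlam x i)
    (hroot : ∀ x ∈ U, f (x - lam x • a) = 0) :
    ∀ x ∈ U, gradf (x - lam x • a) ≠ 0 →
      ∀ η : Fin n → ℂ,
        (∑ i, (x - lam x • a) i * br (gradlam x) η i) = 0 ∧
        (∑ i, x i * br (gradlam x) η i) =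
          lam x * ∑ i, a i * br (gradlam x) η i :=
  stmt_5_general n br halt f gradf hf hgradf χ hsemi a U hU lam gradlam hlam hgradlam hroot
end

section
/- Let x, a : Fin 3 → ℂ be linearly independent over ℂ. Then there exist vectors w₁, u, v : Fin 3 → ℂ such that: (i) for every λ ∈ ℂ, Σᵢ (x(i) + λ·a(i))·w₁(i) = 0 and Σᵢ (x(i) + λ·a(i))·(u(i) + λ·v(i)) = 0; (ii) v ≠ 0; and (iii) w₁ and u are linearly independent. (Proposition 8.15 of the paper: for a generic pair (x,a) ∈ ℂ³ × ℂ³, the equation (x + λa)·w(λ) = 0 has polynomial solutions w₁(λ) of degree 0 and w₂(λ) = u + λ·v of degree 1 whose initial vectors w₁(0), w₂(0) are linearly independent.) -/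
/-!
Put `c = x ⨯₃ a` and pick `e` with `e ⬝ᵥ c ≠ 0`, possible because `c ≠ 0`. The constant
`w₁ = c` is orthogonal to both `x` and `a`, and `w₂(λ) = e ⨯₃ (x + λa) = e ⨯₃ x + λ (e ⨯₃ a)`
is orthogonal to `x + λa` for every `λ`. All the nondegeneracy needed comes from the single
scalar `e ⬝ᵥ c = det (e, x, a)`: it is, up to sign, the dot product of `e ⨯₃ a` with `x`, and
the dot products `e ⬝ᵥ c` and `a ⬝ᵥ (e ⨯₃ x)` separate `c` from `e ⨯₃ x`.
-/

open Matrix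

theorem Matrix.exists_dotProduct_ne_zero {n R : Type*} [Fintype n] [Semiring R] {v : n → R}
    (hv : v ≠ 0) : ∃ w, v ⬝ᵥ w ≠ 0 := by
  by_contra! hall
  exact hv (dotProduct_eq_zero v hall)

theorem Matrix.linearIndependent_pair_of_dotProduct {n R : Type*} [Fintype n] [CommRing R]
    [NoZeroDivisors R] {p q e f : n → R} (hpe : e ⬝ᵥ p ≠ 0) (hqe : e ⬝ᵥ q = 0)
    (hpf : f ⬝ᵥ p = 0) (hqf : f ⬝ᵥ q ≠ 0) : LinearIndependent R ![p, q] := by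
  rw [LinearIndependent.pair_iff]
  intro s t hst
  have hs : s * (e ⬝ᵥ p) = 0 := by
    simpa [dotProduct_add, hqe] using congrArg (e ⬝ᵥ ·) hst
  have ht : t * (f ⬝ᵥ q) = 0 := by
    simpa [dotProduct_add, hpf] using congrArg (f ⬝ᵥ ·) hst
  exact ⟨(mul_eq_zero.1 hs).resolve_right hpe, (mul_eq_zero.1 ht).resolve_right hqf⟩

theorem add_smul_dotProduct_cross_add_smul {R : Type*} [CommRing R] (x a e : Fin 3 → R)
    (t : R) : (x + t • a) ⬝ᵥ (e ⨯₃ x + t • e ⨯₃ a) = 0 := by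
  rw [← map_smul, ← map_add, dot_cross_self]

/-- Proposition 8.15: for linearly independent `x, a ∈ ℂ³`, the equation
`(x + λa)·w(λ) = 0` has polynomial solutions `w₁(λ) = w₁` of degree 0 and
`w₂(λ) = u + λv` of degree 1 whose initial vectors `w₁` and `u` are linearly
independent. -/
theorem stmt_7 (x a : Fin 3 → ℂ) (h : LinearIndependent ℂ ![x, a]) :
    ∃ w₁ u v : Fin 3 → ℂ,
      (∀ lam : ℂ,
        (∑ i, (x i + lam * a i) * w₁ i) = 0 ∧
        (∑ i, (x i + lam * a i) * (u i + lam * v i)) = 0) ∧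
      v ≠ 0 ∧ LinearIndependent ℂ ![w₁, u] := by
  obtain ⟨e, he⟩ := exists_dotProduct_ne_zero (crossProduct_ne_zero_iff_linearIndependent.2 h)
  rw [dotProduct_comm] at he
  have hx_ea : x ⬝ᵥ e ⨯₃ a = -(e ⬝ᵥ x ⨯₃ a) := by
    rw [triple_product_permutation, ← cross_anticomm, dotProduct_neg]
  have ha_ex : a ⬝ᵥ e ⨯₃ x = e ⬝ᵥ x ⨯₃ a := by
    rw [triple_product_permutation, triple_product_permutation]
  refine ⟨x ⨯₃ a, e ⨯₃ x, e ⨯₃ a, fun t => ⟨?_, ?_⟩, ?_, ?_⟩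
  · change (x + t • a) ⬝ᵥ x ⨯₃ a = 0
    rw [add_dotProduct, smul_dotProduct, dot_self_cross, dot_cross_self, smul_zero, add_zero]
  · exact add_smul_dotProduct_cross_add_smul x a e t
  · rintro hv
    rw [hv, dotProduct_zero, eq_comm, neg_eq_zero] at hx_ea
    exact he hx_ea
  · exact linearIndependent_pair_of_dotProduct he (dot_self_cross e x) (dot_cross_self x a)
      (ha_ex ▸ he)
end

section
/- Let n ≥ 2 and let a, b : Fin n → ℂ. Assume b(0) ≠ 0 and a(1)·b(0) ≠ a(0)·b(1). Then the lower-triangular Toeplitz matrix T(b) is invertible and the matrix T(b)⁻¹ * T(a) is similar to the single n × n Jordan block J(a(0)/b(0), n). (Proposition 4.3 of the paper: the Jordan canonical form of P_B⁻¹P_A for two lower-triangular Toeplitz matrices with b₁ ≠ 0 and a₂b₁ ≠ a₁b₂ consists of one Jordan n × n block with eigenvalue a₁/b₁.) -/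
/-- The `n × n` lower-triangular Toeplitz matrix with entries `T(a)(i,j) = a(i−j)` for
`j ≤ i` and `0` for `j > i`. -/
def toep (n : ℕ) (a : Fin n → ℂ) : Matrix (Fin n) (Fin n) ℂ :=
  fun i j =>
    if (j : ℕ) ≤ (i : ℕ) then
      a ⟨(i : ℕ) - (j : ℕ), Nat.lt_of_le_of_lt (Nat.sub_le _ _) i.isLt⟩
    else 0

/-- The `k × k` Jordan block with eigenvalue `μ`. -/
def jordanBlock (μ : ℂ) (k : ℕ) : Matrix (Fin k) (Fin k) ℂ :=
  fun i j => if i = j then μ else if (i : ℕ) + 1 = (j : ℕ) then 1 else 0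

/-!
Lower-triangular Toeplitz matrices are the image of the ring homomorphism
`toeplitzRingHom n : R⟦X⟧ →+* Matrix (Fin n) (Fin n) R`, so `T(b)⁻¹ T(a) = T(c)` for the
power series quotient `c = a / b`, whose coefficients satisfy `c₀ = a₀ / b₀` and
`b₀² c₁ = a₁b₀ - a₀b₁ ≠ 0`. Hence `T(c) = c₀ • 1 + K` with `K = T(c - c₀)`, and `K ^ n = 0`
since `c - c₀` has order one. The matrix `S` whose rows are `eₙ₋₁ Kⁱ` intertwines `K` with the
nilpotent Jordan block, `S K = J(0, n) S`; reversing its columns makes it upper triangular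
with diagonal `c₁ⁱ`, so `S` is invertible.
-/

open PowerSeries Matrix Finset

section Toeplitz

variable {R : Type*} [Semiring R] (n : ℕ)

noncomputable def toeplitz (f : R⟦X⟧) : Matrix (Fin n) (Fin n) R :=
  Matrix.of fun i j => if (j : ℕ) ≤ i then coeff (i - j : ℕ) f else 0

variable {n}

@[simp]
lemma toeplitz_apply (f : R⟦X⟧) (i j : Fin n) :
    toeplitz n f i j = if (j : ℕ) ≤ i then coeff (i - j : ℕ) f else 0 :=
  rfl

lemma toeplitz_mul (f g : R⟦X⟧) : toeplitz n (f * g) = toeplitz n f * toeplitz n g := by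
  ext i j
  have hsummand : ∀ k : Fin n, toeplitz n f i k * toeplitz n g k j =
      if (j : ℕ) ≤ k ∧ (k : ℕ) ≤ i then coeff (i - k : ℕ) f * coeff (k - j : ℕ) g else 0 := by
    intro k
    simp only [toeplitz_apply]
    split_ifs <;> first | rfl | (exfalso; omega) | simp
  rw [mul_apply, sum_congr rfl fun k _ => hsummand k, ← sum_filter, toeplitz_apply, coeff_mul]
  split_ifs with hij
  · refine sum_bij' (fun p hp => ⟨j + p.2, by have := i.isLt; simp at hp; omega⟩)
      (fun k _ => ((i : ℕ) - k, (k : ℕ) - j)) ?_ ?_ ?_ ?_ ?_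
    all_goals simp +contextual only [HasAntidiagonal.mem_antidiagonal, mem_filter, mem_univ,
      true_and, Prod.forall, Prod.mk.injEq, Fin.ext_iff]
    any_goals omega
    intro p q hpq
    rw [show (i : ℕ) - (j + q) = p by omega, Nat.add_sub_cancel_left]
  · exact (sum_eq_zero fun k hk => by simp at hk; omega).symm

lemma toeplitz_C (r : R) : toeplitz n (C r) = r • 1 := by
  ext i j
  simp only [toeplitz_apply, coeff_C, Matrix.smul_apply, one_apply, Fin.ext_iff]
  split_ifs <;> first | (exfalso; omega) | simp

variable (n) in
noncomputable def toeplitzRingHom : R⟦X⟧ →+* Matrix (Fin n) (Fin n) R where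
  toFun := toeplitz n
  map_one' := by rw [← map_one C, toeplitz_C, one_smul]
  map_mul' := toeplitz_mul
  map_zero' := by ext; simp
  map_add' f g := by ext; simp [apply_ite₂]

@[simp]
lemma toeplitzRingHom_apply (f : R⟦X⟧) : toeplitzRingHom n f = toeplitz n f := rfl

noncomputable def seriesOfFin (a : Fin n → R) : R⟦X⟧ :=
  mk fun k => if h : k < n then a ⟨k, h⟩ else 0

lemma coeff_seriesOfFin (a : Fin n → R) (k : ℕ) (hk : k < n) :
    coeff k (seriesOfFin a) = a ⟨k, hk⟩ := by
  rw [seriesOfFin, coeff_mk, dif_pos hk]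

lemma toep_eq_toeplitz_seriesOfFin (a : Fin n → ℂ) : toep n a = toeplitz n (seriesOfFin a) := by
  ext i j
  rw [toeplitz_apply, toep]
  split_ifs with hij
  · rw [coeff_seriesOfFin]
  · rfl

end Toeplitz

section CommRing

variable {R : Type*} [CommRing R] {N : R⟦X⟧}

lemma coeff_pow_of_lt_of_constantCoeff_eq_zero (hN : constantCoeff N = 0) {k m : ℕ} (h : k < m) :
    coeff k (N ^ m) = 0 :=
  coeff_of_lt_order k
    ((ENat.natCast_lt_natCast.2 h).trans_le (le_order_pow_of_constantCoeff_eq_zero m hN))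

lemma coeff_pow_self_of_constantCoeff_eq_zero (hN : constantCoeff N = 0) (m : ℕ) :
    coeff m (N ^ m) = coeff 1 N ^ m := by
  obtain ⟨h, rfl⟩ := X_dvd_iff.2 hN
  rw [mul_pow, coeff_X_pow_mul', if_pos le_rfl, Nat.sub_self, coeff_zero_eq_constantCoeff,
    map_pow, coeff_succ_X_mul, coeff_zero_eq_constantCoeff]

lemma toeplitz_pow_eq_zero_of_constantCoeff_eq_zero (n : ℕ) (hN : constantCoeff N = 0) :
    toeplitz n N ^ n = 0 := by
  ext i j
  rw [← toeplitzRingHom_apply, ← map_pow, toeplitzRingHom_apply, toeplitz_apply,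
    coeff_pow_of_lt_of_constantCoeff_eq_zero hN (by omega), ite_self, Matrix.zero_apply]

variable {n : ℕ}

lemma toeplitz_inv_mul (u : R⟦X⟧ˣ) (f : R⟦X⟧) :
    (toeplitz n u)⁻¹ * toeplitz n f = toeplitz n ((↑u⁻¹ : R⟦X⟧) * f) := by
  rw [toeplitz_mul, inv_eq_left_inv (B := toeplitz n ↑u⁻¹)]
  rw [← toeplitz_mul, u.inv_mul, ← toeplitzRingHom_apply, map_one]

def krylov (K : Matrix (Fin n) (Fin n) R) (v : Fin n → R) : Matrix (Fin n) (Fin n) R :=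
  Matrix.of fun i => v ᵥ* K ^ (i : ℕ)

@[simp]
lemma krylov_apply (K : Matrix (Fin n) (Fin n) R) (v : Fin n → R) (i j : Fin n) :
    krylov K v i j = (v ᵥ* K ^ (i : ℕ)) j :=
  rfl

lemma krylov_toeplitz_single_last_apply (N : R⟦X⟧) (i j : Fin (n + 1)) :
    krylov (toeplitz (n + 1) N) (Pi.single (Fin.last n) 1) i j = coeff (n - j) (N ^ (i : ℕ)) := by
  rw [krylov_apply, single_vecMul, one_smul, ← toeplitzRingHom_apply, ← map_pow, row_apply,
    toeplitzRingHom_apply, toeplitz_apply, Fin.val_last, if_pos (Fin.is_le j)]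

lemma isUnit_krylov_toeplitz_single_last {N : R⟦X⟧} (hN : constantCoeff N = 0)
    (hN₁ : IsUnit (coeff 1 N)) :
    IsUnit (krylov (toeplitz (n + 1) N) (Pi.single (Fin.last n) 1)) := by
  set S := krylov (toeplitz (n + 1) N) (Pi.single (Fin.last n) 1) with hS
  have hrev : ∀ i j, S.submatrix id Fin.revPerm i j = coeff j (N ^ (i : ℕ)) := by
    intro i j
    rw [submatrix_apply, id, hS, krylov_toeplitz_single_last_apply, Fin.revPerm_apply,
      Fin.val_rev, show n - (n + 1 - (j + 1)) = j by omega]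
  have hdet : ((Equiv.Perm.sign (Fin.revPerm (n := n + 1)) : ℤ) : R) * S.det =
      ∏ i : Fin (n + 1), coeff 1 N ^ (i : ℕ) := by
    rw [← det_permute', det_of_isUpperTriangular]
    · simp only [hrev, coeff_pow_self_of_constantCoeff_eq_zero hN]
    · intro i j hji
      exact (hrev i j).trans (coeff_pow_of_lt_of_constantCoeff_eq_zero hN hji)
  have hprod : IsUnit (∏ i : Fin (n + 1), coeff 1 N ^ (i : ℕ)) :=
    IsUnit.prod_iff.2 fun i _ => hN₁.pow _
  rw [← hdet] at hprod
  exact (isUnit_iff_isUnit_det S).2 (isUnit_of_mul_isUnit_right hprod)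

end CommRing

section Jordan

variable {n : ℕ}

lemma jordanBlock_eq_smul_one_add (μ : ℂ) : jordanBlock μ n = μ • 1 + jordanBlock 0 n := by
  ext i j
  simp only [jordanBlock, Matrix.add_apply, Matrix.smul_apply, one_apply, smul_eq_mul]
  split_ifs <;> simp

lemma jordanBlock_zero_mul_apply (A : Matrix (Fin n) (Fin n) ℂ) (i j : Fin n) :
    (jordanBlock 0 n * A) i j = if h : (i : ℕ) + 1 < n then A ⟨i + 1, h⟩ j else 0 := by
  rw [mul_apply]
  split_ifs with h
  · rw [sum_eq_single ⟨i + 1, h⟩]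
    · simp [jordanBlock, Fin.ext_iff]
    · intro k _ hk
      have hik : (i : ℕ) + 1 ≠ k := fun hik => hk (Fin.ext hik.symm)
      simp [jordanBlock, hik]
    · simp
  · refine sum_eq_zero fun k _ => ?_
    have hik : (i : ℕ) + 1 ≠ k := by omega
    simp [jordanBlock, hik]

lemma krylov_mul_eq_jordanBlock_zero_mul {K : Matrix (Fin n) (Fin n) ℂ} {v : Fin n → ℂ}
    (hv : v ᵥ* K ^ n = 0) : krylov K v * K = jordanBlock 0 n * krylov K v := by
  ext i j
  have hrow : (krylov K v * K) i j = (v ᵥ* K ^ ((i : ℕ) + 1)) j := by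
    rw [pow_succ, ← vecMul_vecMul]; rfl
  rw [hrow, jordanBlock_zero_mul_apply]
  split_ifs with h
  · rfl
  · rw [show (i : ℕ) + 1 = n by omega, hv, Pi.zero_apply]

lemma smul_one_add_eq_inv_krylov_mul_jordanBlock_mul {K : Matrix (Fin n) (Fin n) ℂ}
    {v : Fin n → ℂ} (μ : ℂ) (hv : v ᵥ* K ^ n = 0) (hS : IsUnit (krylov K v)) :
    μ • 1 + K = (krylov K v)⁻¹ * jordanBlock μ n * krylov K v := by
  have hconj : krylov K v * (μ • 1 + K) = jordanBlock μ n * krylov K v := by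
    rw [jordanBlock_eq_smul_one_add, Matrix.mul_add, Matrix.add_mul,
      krylov_mul_eq_jordanBlock_zero_mul hv, Matrix.mul_smul, Matrix.smul_mul, Matrix.mul_one,
      Matrix.one_mul]
  rw [Matrix.mul_assoc, ← hconj, ← Matrix.mul_assoc,
    nonsing_inv_mul _ ((isUnit_iff_isUnit_det _).1 hS), Matrix.one_mul]

theorem toeplitz_eq_inv_mul_jordanBlock_mul (c : ℂ⟦X⟧) (hc : coeff 1 c ≠ 0) :
    ∃ S, IsUnit S ∧
      toeplitz (n + 1) c = S⁻¹ * jordanBlock (constantCoeff c) (n + 1) * S := by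
  set N := c - C (constantCoeff c)
  have hN : constantCoeff N = 0 := by simp [N]
  have hN₁ : coeff 1 N = coeff 1 c := by simp [N]
  have hS := isUnit_krylov_toeplitz_single_last (n := n) hN (hN₁ ▸ hc.isUnit)
  refine ⟨_, hS, ?_⟩
  rw [← smul_one_add_eq_inv_krylov_mul_jordanBlock_mul _ _ hS]
  · rw [← toeplitz_C, ← toeplitzRingHom_apply, ← toeplitzRingHom_apply, ← toeplitzRingHom_apply,
      ← map_add, add_sub_cancel]
  · rw [toeplitz_pow_eq_zero_of_constantCoeff_eq_zero _ hN, vecMul_zero]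

end Jordan

/-- Proposition 4.3: for lower-triangular Toeplitz matrices `T(a)`, `T(b)` with
`b₀ ≠ 0` and `a₁b₀ ≠ a₀b₁`, the matrix `T(b)⁻¹ T(a)` is similar to a single
`n × n` Jordan block with eigenvalue `a₀/b₀`. -/
theorem stmt_8 (n : ℕ) (hn : 2 ≤ n) (a b : Fin n → ℂ)
    (hb0 : b ⟨0, by omega⟩ ≠ 0)
    (hab : a ⟨1, by omega⟩ * b ⟨0, by omega⟩ ≠ a ⟨0, by omega⟩ * b ⟨1, by omega⟩) :
    IsUnit (toep n b) ∧
    ∃ S : Matrix (Fin n) (Fin n) ℂ, IsUnit S ∧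
      (toep n b)⁻¹ * toep n a =
        S⁻¹ * jordanBlock (a ⟨0, by omega⟩ / b ⟨0, by omega⟩) n * S := by
  obtain ⟨m, rfl⟩ : ∃ m, n = m + 1 := ⟨n - 1, by omega⟩
  have hB0 : constantCoeff (seriesOfFin b) = b ⟨0, by omega⟩ := by
    rw [← coeff_zero_eq_constantCoeff_apply, coeff_seriesOfFin]
  obtain ⟨u, hu⟩ : IsUnit (seriesOfFin b) :=
    isUnit_iff_constantCoeff.2 (hB0 ▸ hb0.isUnit)
  rw [toep_eq_toeplitz_seriesOfFin b, ← hu, toep_eq_toeplitz_seriesOfFin a, toeplitz_inv_mul]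
  refine ⟨u.isUnit.map (toeplitzRingHom (m + 1)), ?_⟩
  set c := (↑u⁻¹ : ℂ⟦X⟧) * seriesOfFin a
  have hc : seriesOfFin b * c = seriesOfFin a := by rw [← hu, u.mul_inv_cancel_left]
  have hc₀ : constantCoeff c = a ⟨0, by omega⟩ / b ⟨0, by omega⟩ := by
    rw [eq_div_iff hb0, mul_comm, ← hB0, ← map_mul, hc, ← coeff_zero_eq_constantCoeff_apply,
      coeff_seriesOfFin]
  have hc₁ : coeff 1 c ≠ 0 := by
    intro h
    have h₁ := congrArg (coeff 1) hc
    rw [coeff_one_mul, h, zero_mul, add_zero, coeff_seriesOfFin _ 1 (by omega), hc₀,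
      coeff_seriesOfFin _ 1 (by omega)] at h₁
    apply hab
    field_simp at h₁
    linear_combination -h₁
  rw [← hc₀]
  exact toeplitz_eq_inv_mul_jordanBlock_mul c hc₁
end

section
/- Let m ≥ 0 and λ ∈ ℂ, and let M(λ) be the (2m+1) × (2m+1) Kronecker-block matrix. Then the kernel of M(λ) is the one-dimensional subspace spanned by the vector w(λ) defined by w(λ)(inl i) = 0 for i ∈ Fin m and w(λ)(inr j) = (−λ)^{m − j} for j ∈ Fin (m+1). (Proposition 2.2(2) of the paper: for one Kronecker block with standard basis e₁,…,e_{k−1}, f₁,…,f_k (k = m+1), Ker(A + λB) = span(f_k − λ f_{k−1} + λ² f_{k−2} − ⋯).) -/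
/-! The equations `P(λ) y = 0` say `y_j = -λ y_{j+1}`, so `y` is determined by its last entry
and is a multiple of `((-λ)^{m-j})_j`. The equations `P(λ)ᵀ x = 0` force `x = 0`, because the
first `m` columns of `P(λ)` form an upper unitriangular matrix. -/

/-- The `m × (m+1)` matrix `P(λ)` with `P(λ)(i,i) = 1`, `P(λ)(i,i+1) = λ` and all
other entries `0`. -/
def Pmat (m : ℕ) (lam : ℂ) : Matrix (Fin m) (Fin (m + 1)) ℂ :=
  fun i j =>
    if (j : ℕ) = (i : ℕ) then 1 else if (j : ℕ) = (i : ℕ) + 1 then lam else 0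

/-- The `(2m+1) × (2m+1)` Kronecker block `A + λB` in block form. -/
def Mk (m : ℕ) (lam : ℂ) :
    Matrix (Fin m ⊕ Fin (m + 1)) (Fin m ⊕ Fin (m + 1)) ℂ :=
  Matrix.fromBlocks 0 (Pmat m lam) (-(Pmat m lam).transpose) 0

open Matrix

theorem Fin.forall_castSucc_eq_mul_succ_iff {R : Type*} [CommMonoid R] {n : ℕ} (a : R)
    (y : Fin (n + 1) → R) :
    (∀ i : Fin n, y i.castSucc = a * y i.succ) ↔
      ∃ c : R, y = c • fun j : Fin (n + 1) => a ^ (n - (j : ℕ)) := by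
  have hexp : ∀ i : Fin n, n - (i : ℕ) = n - ((i : ℕ) + 1) + 1 := fun i => by omega
  constructor
  · intro hy
    refine ⟨y (Fin.last n), funext fun j => ?_⟩
    induction j using Fin.reverseInduction with
    | last => simp
    | cast i ih =>
      simp only [Pi.smul_apply, smul_eq_mul, Fin.val_succ, Fin.val_castSucc] at ih ⊢
      rw [hy, ih, hexp, pow_succ]
      ac_rfl
  · rintro ⟨c, rfl⟩ i
    simp only [Pi.smul_apply, smul_eq_mul, Fin.val_succ, Fin.val_castSucc]
    rw [hexp, pow_succ]
    ac_rfl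

theorem Pmat_mulVec_apply (m : ℕ) (lam : ℂ) (y : Fin (m + 1) → ℂ) (i : Fin m) :
    (Pmat m lam *ᵥ y) i = y i.castSucc + lam * y i.succ := by
  have hrow : Pmat m lam i = Pi.single i.castSucc 1 + Pi.single i.succ lam := by
    ext j
    simp only [Pmat, Pi.add_apply, Pi.single_apply, Fin.ext_iff, Fin.val_castSucc, Fin.val_succ]
    split_ifs <;> first | omega | simp
  rw [mulVec, hrow, add_dotProduct, single_dotProduct, single_dotProduct, one_mul]

theorem Pmat_mulVec_eq_zero_iff (m : ℕ) (lam : ℂ) (y : Fin (m + 1) → ℂ) :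
    Pmat m lam *ᵥ y = 0 ↔ ∃ c : ℂ, y = c • fun j : Fin (m + 1) => (-lam) ^ (m - (j : ℕ)) := by
  rw [← Fin.forall_castSucc_eq_mul_succ_iff, funext_iff]
  refine forall_congr' fun i => ?_
  rw [Pmat_mulVec_apply, Pi.zero_apply, neg_mul, eq_neg_iff_add_eq_zero]

theorem det_Pmat_submatrix_castSucc (m : ℕ) (lam : ℂ) :
    ((Pmat m lam).submatrix id Fin.castSucc).det = 1 := by
  rw [det_of_isUpperTriangular]
  · simp [Pmat]
  · intro i j hji
    have : (j : ℕ) < i := hji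
    simp only [submatrix_apply, id_eq, Pmat, Fin.val_castSucc]
    rw [if_neg (by omega), if_neg (by omega)]

theorem vecMul_Pmat_eq_zero_iff (m : ℕ) (lam : ℂ) (x : Fin m → ℂ) :
    x ᵥ* Pmat m lam = 0 ↔ x = 0 := by
  refine ⟨fun hx => ?_, fun hx => hx ▸ zero_vecMul _⟩
  have hsub : x ᵥ* (Pmat m lam).submatrix id Fin.castSucc = 0 := by
    ext j
    simpa [vecMul, dotProduct] using congrFun hx j.castSucc
  by_contra hne
  have := exists_vecMul_eq_zero_iff.mp ⟨x, hne, hsub⟩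
  simp [det_Pmat_submatrix_castSucc] at this

theorem Mk_mulVec_eq_zero_iff (m : ℕ) (lam : ℂ) (v : Fin m ⊕ Fin (m + 1) → ℂ) :
    Mk m lam *ᵥ v = 0 ↔
      v ∘ Sum.inl ᵥ* Pmat m lam = 0 ∧ Pmat m lam *ᵥ (v ∘ Sum.inr) = 0 := by
  simp only [Mk, fromBlocks_mulVec, zero_mulVec, zero_add, add_zero, neg_mulVec,
    mulVec_transpose, funext_iff, Sum.forall, Sum.elim_inl, Sum.elim_inr, Pi.zero_apply,
    Pi.neg_apply, neg_eq_zero]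
  exact and_comm

/-- Proposition 2.2(2): the kernel of the Kronecker block `A + λB` is spanned by
`f_k − λ f_{k−1} + λ² f_{k−2} − ⋯`, i.e. the vector with components `(−λ)^{m − j}`
in the second block. -/
theorem stmt_9 (m : ℕ) (lam : ℂ) :
    ∀ v : Fin m ⊕ Fin (m + 1) → ℂ,
      (Mk m lam).mulVec v = 0 ↔
      ∃ c : ℂ, v = c •
        Sum.elim (fun _ : Fin m => (0 : ℂ))
          (fun j : Fin (m + 1) => (-lam) ^ (m - (j : ℕ))) := by
  intro v
  have hspan : (∃ c : ℂ, v = c • Sum.elim (fun _ : Fin m => (0 : ℂ))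
      (fun j : Fin (m + 1) => (-lam) ^ (m - (j : ℕ)))) ↔
      v ∘ Sum.inl = 0 ∧
        ∃ c : ℂ, v ∘ Sum.inr = c • fun j : Fin (m + 1) => (-lam) ^ (m - (j : ℕ)) := by
    simp only [funext_iff, Sum.forall, Pi.smul_apply, Sum.elim_inl, Sum.elim_inr, smul_zero,
      Function.comp_apply, Pi.zero_apply, exists_and_left]
  rw [Mk_mulVec_eq_zero_iff, hspan, vecMul_Pmat_eq_zero_iff, Pmat_mulVec_eq_zero_iff]
end

section
/- Let m ≥ 0 and let z : Fin (m+1) → ℂ with z(j) ≠ 0 for all j. Let Y(z) be the m × (m+1) matrix with Y(z)(i, 0) = z(0), Y(z)(i, i+1) = z(i+1), and all other entries 0, and let N(z) = fromBlocks 0 (Y(z)) (−Y(z)ᵀ) 0 be the corresponding (2m+1) × (2m+1) skew-symmetric matrix (rows and columns indexed by Fin m ⊕ Fin (m+1)). Then the kernel of N(z) is the one-dimensional subspace spanned by the vector w with w(inl i) = 0, w(inr 0) = −∏_{j ≠ 0} z(j), and w(inr j) = ∏_{i ≠ j} z(i) for j ≠ 0. (This is the kernel computation underlying Theorem 3.2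 of the paper: for the solvable Lie algebra with basis g₁,…,g_m, h₀,…,h_m and relations [gᵢ,h₀] = h₀, [gᵢ,hᵢ] = hᵢ, taking z(j) = y_j − λ b_j shows that dim Ker(𝒜_x + λ𝒜_a) = 1 for all regular λ, so the Jordan–Kronecker invariants of this Lie algebra consist of a single Kronecker block of size (2m+1) × (2m+1).) -/
/-
Write `v = (x, y)` along `Fin m ⊕ Fin (m + 1)`, so that `N(z) v = 0` means `Yᵀ x = 0` and `Y y = 0`.
Column `i + 1` of `Y` has the single nonzero entry `z (i + 1)`, so `Yᵀ` is injective and `x = 0`.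
Row `i` of `Y y = 0` reads `z 0 * y 0 + z (i + 1) * y (i + 1) = 0`, so every `z j * y j` with `j ≠ 0`
equals `-(z 0 * y 0)`: `y` is determined by `y 0`. The spanning vector `w` satisfies these equations,
since `z j * w j` is `-∏ z` for `j = 0` and `∏ z` otherwise.
-/

/-- The `m × (m+1)` matrix `Y(z)` with `Y(z)(i,0) = z(0)`, `Y(z)(i,i+1) = z(i+1)`
and all other entries `0`. -/
def Ymat (m : ℕ) (z : Fin (m + 1) → ℂ) : Matrix (Fin m) (Fin (m + 1)) ℂ :=
  fun i j =>
    if (j : ℕ) = 0 then z 0 else if (j : ℕ) = (i : ℕ) + 1 then z j else 0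

/-- The `(2m+1) × (2m+1)` skew-symmetric matrix `N(z)` in block form. -/
def Nmat (m : ℕ) (z : Fin (m + 1) → ℂ) :
    Matrix (Fin m ⊕ Fin (m + 1)) (Fin m ⊕ Fin (m + 1)) ℂ :=
  Matrix.fromBlocks 0 (Ymat m z) (-(Ymat m z).transpose) 0

open Finset Matrix

def kernelVec {K : Type*} [CommRing K] {m : ℕ} (z : Fin (m + 1) → K) : Fin (m + 1) → K :=
  fun j => if j = 0 then -(∏ i ∈ univ.erase (0 : Fin (m + 1)), z i) else ∏ i ∈ univ.erase j, z i

section kernelVec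

variable {K : Type*} {m : ℕ}

theorem mul_kernelVec_zero [CommRing K] (z : Fin (m + 1) → K) :
    z 0 * kernelVec z 0 = -∏ i, z i := by
  rw [kernelVec, if_pos rfl, mul_neg, mul_prod_erase _ _ (mem_univ _)]

theorem mul_kernelVec_succ [CommRing K] (z : Fin (m + 1) → K) (i : Fin m) :
    z i.succ * kernelVec z i.succ = ∏ i, z i := by
  rw [kernelVec, if_neg (Fin.succ_ne_zero i), mul_prod_erase _ _ (mem_univ _)]

theorem forall_add_eq_zero_iff_exists_eq_smul_kernelVec [Field K] {z : Fin (m + 1) → K}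
    (hz : ∀ j, z j ≠ 0) (u : Fin (m + 1) → K) :
    (∀ i : Fin m, z 0 * u 0 + z i.succ * u i.succ = 0) ↔ ∃ c : K, u = c • kernelVec z := by
  constructor
  · intro h
    have hP : ∏ i, z i ≠ 0 := prod_ne_zero_iff.2 fun i _ => hz i
    refine ⟨-(z 0 * u 0) / ∏ i, z i, funext fun j => mul_left_cancel₀ (hz j) ?_⟩
    rw [Pi.smul_apply, smul_eq_mul, mul_left_comm]
    induction j using Fin.cases with
    | zero => rw [mul_kernelVec_zero, mul_neg, div_mul_cancel₀ _ hP, neg_neg]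
    | succ i => rw [mul_kernelVec_succ, div_mul_cancel₀ _ hP]; linear_combination h i
  · rintro ⟨c, rfl⟩ i
    simp only [Pi.smul_apply, smul_eq_mul, mul_left_comm (z _) c, mul_kernelVec_zero,
      mul_kernelVec_succ]
    ring

end kernelVec

theorem Ymat_mulVec_apply (m : ℕ) (z u : Fin (m + 1) → ℂ) (i : Fin m) :
    (Ymat m z *ᵥ u) i = z 0 * u 0 + z i.succ * u i.succ := by
  rw [mulVec, dotProduct, Fin.sum_univ_succ, Fintype.sum_eq_single i]
  · simp [Ymat]
  · intro k hk
    simp [Ymat, Fin.val_succ, Fin.val_inj, hk]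

theorem Ymat_transpose_mulVec_succ (m : ℕ) (z : Fin (m + 1) → ℂ) (x : Fin m → ℂ) (i : Fin m) :
    ((Ymat m z)ᵀ *ᵥ x) i.succ = z i.succ * x i := by
  rw [mulVec, dotProduct, Fintype.sum_eq_single i]
  · simp [Ymat]
  · intro k hk
    simp [Ymat, Fin.val_succ, Fin.val_inj, hk.symm]

theorem Ymat_transpose_mulVec_eq_zero_iff {m : ℕ} {z : Fin (m + 1) → ℂ} (hz : ∀ j, z j ≠ 0)
    (x : Fin m → ℂ) : (Ymat m z)ᵀ *ᵥ x = 0 ↔ x = 0 := by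
  refine ⟨fun h => funext fun i => ?_, fun h => h ▸ mulVec_zero _⟩
  have := congrFun h i.succ
  rw [Ymat_transpose_mulVec_succ, Pi.zero_apply, mul_eq_zero] at this
  exact this.resolve_left (hz _)

theorem Ymat_mulVec_eq_zero_iff {m : ℕ} {z : Fin (m + 1) → ℂ} (hz : ∀ j, z j ≠ 0)
    (u : Fin (m + 1) → ℂ) : Ymat m z *ᵥ u = 0 ↔ ∃ c : ℂ, u = c • kernelVec z := by
  rw [← forall_add_eq_zero_iff_exists_eq_smul_kernelVec hz, funext_iff]
  simp only [Ymat_mulVec_apply, Pi.zero_apply]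

theorem Nmat_mulVec_eq_zero_iff {m : ℕ} {z : Fin (m + 1) → ℂ} (hz : ∀ j, z j ≠ 0)
    (v : Fin m ⊕ Fin (m + 1) → ℂ) :
    Nmat m z *ᵥ v = 0 ↔ v ∘ Sum.inl = 0 ∧ Ymat m z *ᵥ (v ∘ Sum.inr) = 0 := by
  rw [Nmat, fromBlocks_mulVec, ← Sum.elim_zero_zero, Sum.elim_eq_iff, and_comm]
  simp [neg_mulVec, Ymat_transpose_mulVec_eq_zero_iff hz]

/-- The kernel computation underlying Theorem 3.2: if all `z(j) ≠ 0`, the kernel of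
`N(z)` is spanned by the vector `w` with `w(inr 0) = −∏_{j≠0} z(j)` and
`w(inr j) = ∏_{i≠j} z(i)` for `j ≠ 0` (and vanishing first block). -/
theorem stmt_11 (m : ℕ) (z : Fin (m + 1) → ℂ) (hz : ∀ j, z j ≠ 0) :
    ∀ v : Fin m ⊕ Fin (m + 1) → ℂ,
      (Nmat m z).mulVec v = 0 ↔
      ∃ c : ℂ, v = c •
        Sum.elim (fun _ : Fin m => (0 : ℂ))
          (fun j : Fin (m + 1) =>
            if j = 0 then -(∏ i ∈ Finset.univ.erase (0 : Fin (m + 1)), z i)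
            else ∏ i ∈ Finset.univ.erase j, z i) := by
  intro v
  change _ ↔ ∃ c : ℂ, v = c • Sum.elim (0 : Fin m → ℂ) (kernelVec z)
  rw [Nmat_mulVec_eq_zero_iff hz, Ymat_mulVec_eq_zero_iff hz]
  constructor
  · rintro ⟨hl, c, hr⟩
    refine ⟨c, funext fun x => ?_⟩
    rcases x with i | j
    · simpa using congrFun hl i
    · simpa using congrFun hr j
  · rintro ⟨c, rfl⟩
    exact ⟨by ext; simp, c, by ext; simp⟩
end

section
/- Let s ≥ 1 and n : Fin s → ℕ with n(i) ≥ 1 for every i. Let V be the free complex vector space with basis consisting of e₀, f₀ and elements e^i_j, f^i_j for i ∈ Fin s and 1 ≤ j ≤ n(i). Define a bracket on basis vectors by (with the conventions e^i_0 := e₀ and f^i_0 := f₀): ⁅e^i_j, f^i_k⁆ = e^i_{j−k} whenever 0 ≤ k ≤ j ≤ n(i) (in particular ⁅e^i_j, f^i_j⁆ = e₀ and ⁅e^i_j, f₀⁆ = e^i_j), ⁅f^i_k, e^i_j⁆ = −e^i_{j−k} for the same range, and all other brackets of basis vectors equal to 0 (e's bracket e's to 0, f's bracket f's to 0, elements with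 different upper index i commute, and ⁅e^i_j, f^i_k⁆ = 0 for j < k). Then this bracket makes V a complex Lie algebra. (The Lie-algebra structure asserted in Theorem 4.2 of the paper, which realizes one Jordan tuple with a unique maximum J_λ(2n₁+2, 2n₂, …, 2n_s).) -/
/-- Basis of the free vector space: `e₀`, `f₀` and `e^i_{j+1}`, `f^i_{j+1}` for
`i ∈ Fin s`, `j ∈ Fin (n i)` (so `e i j` represents `e^i_{j+1}`, `1 ≤ j+1 ≤ n(i)`). -/
inductive B12 (s : ℕ) (n : Fin s → ℕ) : Type
  | e0 : B12 s n
  | f0 : B12 s n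
  | e (i : Fin s) (j : Fin (n i)) : B12 s n
  | f (i : Fin s) (j : Fin (n i)) : B12 s n

/-- `Evec s n i m` is the basis vector `e^i_m`, with the convention `e^i_0 = e₀`. -/
noncomputable def Evec (s : ℕ) (n : Fin s → ℕ) (i : Fin s) : ℕ → (B12 s n →₀ ℂ)
  | 0 => Finsupp.single B12.e0 1
  | m + 1 => if h : m < n i then Finsupp.single (B12.e i ⟨m, h⟩) 1 else 0

/-- The bracket on basis vectors: `⁅e^i_j, f^i_k⁆ = e^i_{j−k}` for `0 ≤ k ≤ j ≤ n(i)`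
(with the conventions `e^i_0 = e₀`, `f^i_0 = f₀`), its antisymmetric counterparts, and
all other brackets of basis vectors equal to `0`. Basis elements `e i j`, `f i j`
represent `e^i_{j+1}`, `f^i_{j+1}`. -/
noncomputable def br12 (s : ℕ) (n : Fin s → ℕ) :
    B12 s n → B12 s n → (B12 s n →₀ ℂ)
  | B12.e i j, B12.f i' k =>
      if i = i' then
        (if (k : ℕ) ≤ (j : ℕ) then Evec s n i ((j : ℕ) - (k : ℕ)) else 0)
      else 0
  | B12.f i' k, B12.e i j =>
      if i = i' then
        (if (k : ℕ) ≤ (j : ℕ) then -Evec s n i ((j : ℕ) - (k : ℕ)) else 0)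
      else 0
  | B12.e0, B12.f0 => Finsupp.single B12.e0 1
  | B12.f0, B12.e0 => -Finsupp.single B12.e0 1
  | B12.e i j, B12.f0 => Finsupp.single (B12.e i j) 1
  | B12.f0, B12.e i j => -Finsupp.single (B12.e i j) 1
  | _, _ => 0

/-- The unique bilinear extension of a bracket prescribed on basis vectors. -/
noncomputable def brExt {B : Type*} (br : B → B → (B →₀ ℂ)) :
    (B →₀ ℂ) →ₗ[ℂ] (B →₀ ℂ) →ₗ[ℂ] (B →₀ ℂ) :=
  Finsupp.lift ((B →₀ ℂ) →ₗ[ℂ] (B →₀ ℂ)) ℂ B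
    fun b₁ => Finsupp.lift (B →₀ ℂ) ℂ B fun b₂ => br b₁ b₂

/-!
The span `E` of `e₀` and the `e^i_j` is an abelian ideal containing every bracket, and the
`f`'s commute with each other. On the chains `e₀ = e^i_0, e^i_1, …, e^i_{n(i)}`, the operator
`ad f₀` is `-1` and `ad f^i_k` is minus the downward shift by `k`; all of these commute.
Given a triple of basis vectors, rotate it so that its first entry `x` lies in `E` (if none
does, every bracket vanishes). Then `⁅x, ⁅y, z⁆⁆ = 0`, and the two remaining Jacobi terms
cancel because `ad y` and `ad z` commute on `x`. Bilinearity extends both identities from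
basis vectors to the whole space.
-/

section Bilinear

variable {R B : Type*} [CommSemiring R]

theorem LinearMap.apply_self_eq_zero_of_single {M : Type*} [AddCommGroup M] [Module R M]
    [IsAddTorsionFree M] (L : (B →₀ R) →ₗ[R] (B →₀ R) →ₗ[R] M)
    (h : ∀ a b, L (Finsupp.single a 1) (Finsupp.single b 1)
      = -L (Finsupp.single b 1) (Finsupp.single a 1)) (x : B →₀ R) :
    L x x = 0 := by
  have hL : L = -L.flip :=
    LinearMap.ext_basis Finsupp.basisSingleOne Finsupp.basisSingleOne (by simpa using h)
  exact self_eq_neg.mp (by simpa using LinearMap.congr_fun₂ hL x x)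

variable {M : Type*} [AddCommMonoid M] [Module R M]

def jacobiator (L : M →ₗ[R] M →ₗ[R] M) (x y z : M) : M :=
  L x (L y z) + L y (L z x) + L z (L x y)

theorem jacobiator_rotate (L : M →ₗ[R] M →ₗ[R] M) (x y z : M) :
    jacobiator L x y z = jacobiator L y z x := by
  simp only [jacobiator]; abel

theorem jacobiator_eq_zero_of_single_left (L : (B →₀ R) →ₗ[R] (B →₀ R) →ₗ[R] (B →₀ R))
    {y z : B →₀ R} (h : ∀ a, jacobiator L (Finsupp.single a 1) y z = 0) (x : B →₀ R) :
    jacobiator L x y z = 0 := by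
  have hlin : L.flip (L y z) + (L y).comp (L z) + (L z).comp (L.flip y) = 0 :=
    Finsupp.lhom_ext' fun a => LinearMap.ext_ring (h a)
  exact LinearMap.congr_fun hlin x

theorem jacobiator_eq_zero_of_single (L : (B →₀ R) →ₗ[R] (B →₀ R) →ₗ[R] (B →₀ R))
    (h : ∀ a b c,
      jacobiator L (Finsupp.single a 1) (Finsupp.single b 1) (Finsupp.single c 1) = 0)
    (x y z : B →₀ R) : jacobiator L x y z = 0 := by
  have h₁ (b c : B) (x : B →₀ R) :
      jacobiator L x (Finsupp.single b 1) (Finsupp.single c 1) = 0 :=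
    jacobiator_eq_zero_of_single_left L (h · b c) x
  have h₂ (c : B) (x y : B →₀ R) : jacobiator L x y (Finsupp.single c 1) = 0 := by
    rw [jacobiator_rotate]
    exact jacobiator_eq_zero_of_single_left L
      (fun b => by rw [jacobiator_rotate, jacobiator_rotate]; exact h₁ b c x) y
  rw [← jacobiator_rotate]
  exact jacobiator_eq_zero_of_single_left L
    (fun c => by rw [jacobiator_rotate]; exact h₂ c x y) z

end Bilinear

section Chain

variable {R M : Type*} [CommRing R] [AddCommGroup M] [Module R M]

def ShiftsDown (L : M →ₗ[R] M →ₗ[R] M) (y : M) (E : ℕ → M) (p q : ℕ) : Prop :=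
  ∀ m ≤ p, L y (E m) = if q ≤ m then -E (m - q) else 0

theorem ShiftsDown.mono {L : M →ₗ[R] M →ₗ[R] M} {y : M} {E : ℕ → M} {p p' q : ℕ}
    (h : ShiftsDown L y E p q) (hp : p' ≤ p) : ShiftsDown L y E p' q :=
  fun m hm => h m (hm.trans hp)

theorem ShiftsDown.comm {L : M →ₗ[R] M →ₗ[R] M} {y z : M} {E : ℕ → M} {p q r : ℕ}
    (hy : ShiftsDown L y E p q) (hz : ShiftsDown L z E p r) :
    L y (L z (E p)) = L z (L y (E p)) := by
  rw [hz p le_rfl, hy p le_rfl]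
  by_cases hr : r ≤ p <;> by_cases hq : q ≤ p <;>
    simp only [hr, hq, if_true, if_false, map_neg, map_zero]
  · rw [hy (p - r) (Nat.sub_le p r), hz (p - q) (Nat.sub_le p q), Nat.sub_sub, Nat.sub_sub,
      Nat.add_comm r q]
    by_cases hqr : q + r ≤ p
    · rw [if_pos (by omega), if_pos (by omega)]
    · rw [if_neg (by omega), if_neg (by omega)]
  · rw [hy (p - r) (Nat.sub_le p r), if_neg (by omega), neg_zero]
  · rw [hz (p - q) (Nat.sub_le p q), if_neg (by omega), neg_zero]

end Chain

theorem brExt_single_single {B : Type*} (br : B → B → (B →₀ ℂ)) (a b : B) :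
    brExt br (Finsupp.single a 1) (Finsupp.single b 1) = br a b := by
  simp [brExt]

namespace B12

variable {s : ℕ} {n : Fin s → ℕ}

def isE : B12 s n → Bool
  | e0 => true
  | f0 => false
  | e _ _ => true
  | f _ _ => false

def eSubmodule (s : ℕ) (n : Fin s → ℕ) : Submodule ℂ (B12 s n →₀ ℂ) :=
  Finsupp.supported ℂ ℂ {b | b.isE}

end B12

open B12

variable {s : ℕ} {n : Fin s → ℕ}

theorem br12_antisymm (a b : B12 s n) : br12 s n a b = -br12 s n b a := by
  cases a <;> cases b <;> simp only [br12, neg_neg, neg_zero] <;> split_ifs <;> simp_all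

theorem br12_eq_zero_of_isE_eq {a b : B12 s n} (h : a.isE = b.isE) : br12 s n a b = 0 := by
  cases a <;> cases b <;> simp_all [br12, isE]

theorem Evec_mem_eSubmodule (i : Fin s) (m : ℕ) : Evec s n i m ∈ eSubmodule s n := by
  cases m with
  | zero => exact Finsupp.single_mem_supported ℂ _ rfl
  | succ m =>
    rw [Evec]; split_ifs
    · exact Finsupp.single_mem_supported ℂ _ rfl
    · exact zero_mem _

theorem br12_mem_eSubmodule (a b : B12 s n) : br12 s n a b ∈ eSubmodule s n := by
  cases a <;> cases b <;> simp only [br12] <;> (try split_ifs) <;>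
    first
      | exact zero_mem _
      | exact Evec_mem_eSubmodule _ _
      | exact neg_mem (Evec_mem_eSubmodule _ _)
      | exact Finsupp.single_mem_supported ℂ _ rfl
      | exact neg_mem (Finsupp.single_mem_supported ℂ _ rfl)

theorem brExt_single_eq_zero_of_mem_eSubmodule {x : B12 s n} (hx : x.isE)
    {v : B12 s n →₀ ℂ} (hv : v ∈ eSubmodule s n) :
    brExt (br12 s n) (Finsupp.single x 1) v = 0 := by
  suffices eSubmodule s n ≤ LinearMap.ker (brExt (br12 s n) (Finsupp.single x 1)) from this hv
  rw [eSubmodule, Finsupp.supported_eq_span_single, Submodule.span_le]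
  rintro _ ⟨b, hb, rfl⟩
  simp [brExt_single_single, br12_eq_zero_of_isE_eq (hx.trans hb.symm)]

theorem shiftsDown_of_isE {y : B12 s n} (hy : y.isE) {E : ℕ → B12 s n →₀ ℂ}
    (hE : ∀ m, E m ∈ eSubmodule s n) (p : ℕ) :
    ShiftsDown (brExt (br12 s n)) (Finsupp.single y 1) E p (p + 1) := fun m hm => by
  rw [brExt_single_eq_zero_of_mem_eSubmodule hy (hE m), if_neg (by omega)]

theorem shiftsDown_f0_e0 :
    ShiftsDown (brExt (br12 s n)) (Finsupp.single f0 1) (fun _ => Finsupp.single e0 1) 0 0 :=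
  fun _ _ => by simp [brExt_single_single, br12]

theorem shiftsDown_f_e0 (i : Fin s) (k : Fin (n i)) :
    ShiftsDown (brExt (br12 s n)) (Finsupp.single (f i k) 1) (fun _ => Finsupp.single e0 1)
      0 1 :=
  fun m hm => by simp [brExt_single_single, br12, show m = 0 by omega]

theorem shiftsDown_f0_Evec (i : Fin s) :
    ShiftsDown (brExt (br12 s n)) (Finsupp.single f0 1) (Evec s n i) (n i) 0 := fun m hm => by
  cases m with
  | zero => simp [Evec, brExt_single_single, br12]
  | succ m => simp [Evec, brExt_single_single, br12, show m < n i by omega]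

-- A shift by `n i + 1` runs off the chain: `f i' k` acts by zero on a chain `i ≠ i'`.
theorem shiftsDown_f_Evec (i i' : Fin s) (k : Fin (n i')) :
    ShiftsDown (brExt (br12 s n)) (Finsupp.single (f i' k) 1) (Evec s n i) (n i)
      (if i = i' then k + 1 else n i + 1) := fun m hm => by
  cases m with
  | zero => simp [Evec, brExt_single_single, br12, apply_ite (· = 0)]
  | succ m =>
    rw [Evec, dif_pos (show m < n i by omega), brExt_single_single, br12]
    by_cases hi : i = i'
    · subst hi
      by_cases hk : (k : ℕ) ≤ m
      · simp [hk, Nat.add_sub_add_right]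
      · simp [hk]
    · simp [hi, show ¬ n i + 1 ≤ m + 1 by omega]

theorem exists_shiftsDown_chain {x : B12 s n} (hx : x.isE) :
    ∃ (E : ℕ → B12 s n →₀ ℂ) (p : ℕ), Finsupp.single x 1 = E p ∧
      ∀ y, ∃ q, ShiftsDown (brExt (br12 s n)) (Finsupp.single y 1) E p q := by
  cases x with
  | e0 =>
    -- `e₀` lies on every chain; the constant chain avoids choosing an index `i`.
    have hE : ∀ _ : ℕ, Finsupp.single (e0 : B12 s n) (1 : ℂ) ∈ eSubmodule s n :=
      fun _ => Finsupp.single_mem_supported ℂ _ rfl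
    refine ⟨fun _ => Finsupp.single e0 1, 0, rfl, fun y => ?_⟩
    cases y with
    | e0 => exact ⟨1, shiftsDown_of_isE rfl hE 0⟩
    | e i j => exact ⟨1, shiftsDown_of_isE rfl hE 0⟩
    | f0 => exact ⟨0, shiftsDown_f0_e0⟩
    | f i k => exact ⟨1, shiftsDown_f_e0 i k⟩
  | e i j =>
    refine ⟨Evec s n i, j + 1, by simp [Evec], fun y => ?_⟩
    cases y with
    | e0 => exact ⟨_, shiftsDown_of_isE rfl (Evec_mem_eSubmodule i) _⟩
    | e _ _ => exact ⟨_, shiftsDown_of_isE rfl (Evec_mem_eSubmodule i) _⟩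
    | f0 => exact ⟨0, (shiftsDown_f0_Evec i).mono j.isLt⟩
    | f i' k => exact ⟨_, (shiftsDown_f_Evec i i' k).mono j.isLt⟩
  | f0 | f _ _ => simp [isE] at hx

theorem jacobiator_br12_single_of_isE {x : B12 s n} (hx : x.isE) (y z : B12 s n) :
    jacobiator (brExt (br12 s n))
      (Finsupp.single x 1) (Finsupp.single y 1) (Finsupp.single z 1) = 0 := by
  obtain ⟨E, p, hxE, hE⟩ := exists_shiftsDown_chain hx
  obtain ⟨q, hy⟩ := hE y
  obtain ⟨r, hz⟩ := hE z
  have hx_yz : brExt (br12 s n) (Finsupp.single x 1) (br12 s n y z) = 0 :=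
    brExt_single_eq_zero_of_mem_eSubmodule hx (br12_mem_eSubmodule y z)
  have hcomm := hy.comm hz
  rw [← hxE, brExt_single_single, brExt_single_single] at hcomm
  rw [jacobiator, brExt_single_single, brExt_single_single, brExt_single_single, hx_yz,
    br12_antisymm x y, map_neg, hcomm]
  abel

theorem jacobiator_br12_single (a b c : B12 s n) :
    jacobiator (brExt (br12 s n))
      (Finsupp.single a 1) (Finsupp.single b 1) (Finsupp.single c 1) = 0 := by
  by_cases ha : a.isE
  · exact jacobiator_br12_single_of_isE ha b c
  by_cases hb : b.isE
  · rw [jacobiator_rotate]; exact jacobiator_br12_single_of_isE hb c a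
  by_cases hc : c.isE
  · rw [← jacobiator_rotate]; exact jacobiator_br12_single_of_isE hc a b
  simp only [Bool.not_eq_true] at ha hb hc
  simp [jacobiator, brExt_single_single, br12_eq_zero_of_isE_eq (ha.trans hb.symm),
    br12_eq_zero_of_isE_eq (hb.trans hc.symm), br12_eq_zero_of_isE_eq (hc.trans ha.symm)]

theorem stmt_12_general (s : ℕ) (n : Fin s → ℕ) :
    (∀ x : B12 s n →₀ ℂ, brExt (br12 s n) x x = 0) ∧
    (∀ x y z : B12 s n →₀ ℂ,
      brExt (br12 s n) x (brExt (br12 s n) y z)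
      + brExt (br12 s n) y (brExt (br12 s n) z x)
      + brExt (br12 s n) z (brExt (br12 s n) x y) = 0) :=
  ⟨LinearMap.apply_self_eq_zero_of_single _ fun a b => by
      simpa only [brExt_single_single] using br12_antisymm a b,
    jacobiator_eq_zero_of_single _ jacobiator_br12_single⟩

/-- Theorem 4.2 (Lie algebra structure): the bilinear extension of the bracket `br12`
on the free complex vector space with basis `B12 s n` is alternating and satisfies the
Jacobi identity, i.e. it makes the space a complex Lie algebra. -/
theorem stmt_12 (s : ℕ) (hs : 1 ≤ s) (n : Fin s → ℕ) (hn : ∀ i, 1 ≤ n i) :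
    (∀ x : B12 s n →₀ ℂ, brExt (br12 s n) x x = 0) ∧
    (∀ x y z : B12 s n →₀ ℂ,
      brExt (br12 s n) x (brExt (br12 s n) y z)
      + brExt (br12 s n) y (brExt (br12 s n) z x)
      + brExt (br12 s n) z (brExt (br12 s n) x y) = 0) :=
  stmt_12_general s n
end

section
/- Let p ≥ 1, let s(t) ≥ 1 for t ∈ Fin p, let n(t,i) ≥ 1 for i ∈ Fin (s(t)), let d ≥ 0, let c^i_{t,j} ∈ ℂ be arbitrary constants, and let f_t : (Fin d → ℂ) → ℂ be ℂ-differentiable functions. Let ι be the index set P ⊕ Q ⊕ Z, where P and Q are both Σ t, Σ i, Fin (n(t,i)) (labelling coordinates p^i_{t,j} and q^i_{t,j}, 1 ≤ j ≤ n(t,i)) and Z = Fin d (labelling coordinates z₁,…,z_d). Define a skew-symmetric matrix-valued map Π on ℂ^ι by: Π(w)(P(t,i,j), Q(t,i,k)) = w(P(t,i,j−k)) + c^i_{t,j−k} if j > k, = f_t(z-part of w) if j = k, and = 0 if j < k; Π(w)(P(t,i,j), Q(t',i',k)) = 0 whenever (t,i) ≠ (t',i'); Π(w)(Q-index, P-index)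 = −Π(w)(P-index, Q-index); and all entries of Π(w) in which both indices lie in P, both lie in Q, or at least one lies in Z, are 0. Then Π satisfies the Jacobi identity of a Poisson structure: for every w ∈ ℂ^ι and all indices u, v, r ∈ ι, Σ_{σ ∈ ι} [ Π(w)(σ, u) · ∂_σΠ(v, r)(w) + Π(w)(σ, v) · ∂_σΠ(r, u)(w) + Π(w)(σ, r) · ∂_σΠ(u, v)(w) ] = 0, where ∂_σ denotes the partial derivative of the entry function in the coordinate σ. (Proposition 5.3 of the paper: the bracket {p^i_{t,j}, q^i_{t,k}} = p^i_{t,j−k} + c^i_{t,j−k} for j > k, = f_t(z) for j = k, with all other brackets of coordinates zero, is a well-defined Poisson bracket.) -/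
/-- The index set `P = Q = Σ t, Σ i, Fin (n t i)` labelling the coordinates
`p^i_{t,j+1}` (resp. `q^i_{t,j+1}`). -/
abbrev PQIdx (p : ℕ) (s : Fin p → ℕ) (n : (t : Fin p) → Fin (s t) → ℕ) : Type :=
  Σ t : Fin p, Σ i : Fin (s t), Fin (n t i)

/-- The full index set `ι = P ⊕ Q ⊕ Z`. -/
abbrev Idx15 (p : ℕ) (s : Fin p → ℕ) (n : (t : Fin p) → Fin (s t) → ℕ) (d : ℕ) :
    Type :=
  PQIdx p s n ⊕ (PQIdx p s n ⊕ Fin d)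

/-- The `P`–`Q` entries of the Poisson matrix:
`Π(P(t,i,j), Q(t,i,k)) = p^i_{t,j−k} + c^i_{t,j−k}` if `j > k`, `= f_t(z)` if `j = k`,
and `0` otherwise (also `0` if the `(t,i)` labels differ). -/
def pqEntry (p : ℕ) (s : Fin p → ℕ) (n : (t : Fin p) → Fin (s t) → ℕ) (d : ℕ)
    (c : (t : Fin p) → (i : Fin (s t)) → Fin (n t i) → ℂ)
    (f : Fin p → (Fin d → ℂ) → ℂ)
    (w : Idx15 p s n d → ℂ) : PQIdx p s n → PQIdx p s n → ℂ
  | ⟨t, i, j⟩, ⟨t', i', k⟩ =>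
    if (⟨t, i⟩ : Σ t : Fin p, Fin (s t)) = ⟨t', i'⟩ then
      if (j : ℕ) = (k : ℕ) then f t (fun z => w (Sum.inr (Sum.inr z)))
      else if (k : ℕ) < (j : ℕ) then
        w (Sum.inl ⟨t, i, ⟨(j : ℕ) - (k : ℕ) - 1,
            Nat.lt_of_le_of_lt (Nat.le_trans (Nat.sub_le _ _) (Nat.sub_le _ _))
              j.isLt⟩⟩)
        + c t i ⟨(j : ℕ) - (k : ℕ) - 1,
            Nat.lt_of_le_of_lt (Nat.le_trans (Nat.sub_le _ _) (Nat.sub_le _ _))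
              j.isLt⟩
      else 0
    else 0

/-- The skew-symmetric matrix `Π(w)` of the Poisson structure: the `P`–`Q` block is
`pqEntry`, the `Q`–`P` block is its negative, and all entries with both indices in
`P`, both in `Q`, or at least one in `Z`, are `0`. -/
def Pi15 (p : ℕ) (s : Fin p → ℕ) (n : (t : Fin p) → Fin (s t) → ℕ) (d : ℕ)
    (c : (t : Fin p) → (i : Fin (s t)) → Fin (n t i) → ℂ)
    (f : Fin p → (Fin d → ℂ) → ℂ)
    (w : Idx15 p s n d → ℂ) : Matrix (Idx15 p s n d) (Idx15 p s n d) ℂ :=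
  fun u v =>
    match u, v with
    | Sum.inl a, Sum.inr (Sum.inl b) => pqEntry p s n d c f w a b
    | Sum.inr (Sum.inl b), Sum.inl a => -pqEntry p s n d c f w a b
    | _, _ => 0

/-!
`Π(w)` does not depend on the `q`-coordinates, is affine in the `p`-coordinates, and depends on
the `z`-coordinates only through the diagonal entries `f_t(z)`, while its `Z`-rows vanish. So
only `σ ∈ P` contributes to the Jacobi sum, and there `∂_σ Π` is the linear part `Π⁰(e_σ)`
(`Π` with `c = 0`, `f = 0`); no differentiability of `f` is needed, since `f_t(z)` is constant
along `e_σ`. Summing over `σ` turns the Jacobi sum into a cyclic sum of `Π⁰` evaluated at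
columns of `Π(w)`. Its terms vanish unless exactly one index lies in `P`, and then the identity
reduces to `{p_{j-k₂}, q_{k₁}} = {p_{j-k₁}, q_{k₂}}`: both brackets only depend on `j - k₁ - k₂`.
-/

open Finset

theorem fderiv_apply_eq_zero_of_forall_add_smul_eq {𝕜 E F : Type*} [NontriviallyNormedField 𝕜]
    [NormedAddCommGroup E] [NormedSpace 𝕜 E] [NormedAddCommGroup F] [NormedSpace 𝕜 F]
    {g : E → F} {x v : E} (h : ∀ t : 𝕜, g (x + t • v) = g x) : fderiv 𝕜 g x v = 0 := by
  by_cases hg : DifferentiableAt 𝕜 g x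
  · rw [← hg.lineDeriv_eq_fderiv, lineDeriv, funext h, deriv_const]
  · rw [fderiv_zero_of_not_differentiableAt hg, zero_apply]

section
variable {p : ℕ} {s : Fin p → ℕ} {n : (t : Fin p) → Fin (s t) → ℕ} {d : ℕ}
  {c : (t : Fin p) → (i : Fin (s t)) → Fin (n t i) → ℂ} {f : Fin p → (Fin d → ℂ) → ℂ}

theorem pqEntry_zero_zero_of_forall_inl_eq_zero {x : Idx15 p s n d → ℂ}
    (hx : ∀ e, x (Sum.inl e) = 0) (a b : PQIdx p s n) : pqEntry p s n d 0 0 x a b = 0 := by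
  obtain ⟨t, i, j⟩ := a
  obtain ⟨t', i', k⟩ := b
  simp only [pqEntry]
  split_ifs <;> simp [hx]

theorem sum_mul_pqEntry_single (y : PQIdx p s n → ℂ) (a b : PQIdx p s n) :
    ∑ e, y e * pqEntry p s n d 0 0 (Pi.single (Sum.inl e) 1) a b
      = pqEntry p s n d 0 0 (Sum.elim y 0) a b := by
  obtain ⟨t, i, j⟩ := a
  obtain ⟨t', i', k⟩ := b
  simp only [pqEntry]
  split_ifs <;> simp [Pi.single_apply]

theorem fderiv_pqEntry_apply_single (w : Idx15 p s n d → ℂ) (a b : PQIdx p s n)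
    {σ : Idx15 p s n d} (hσ : ∀ z, σ ≠ Sum.inr (Sum.inr z)) :
    fderiv ℂ (fun w' => pqEntry p s n d c f w' a b) w (Pi.single σ 1)
      = pqEntry p s n d 0 0 (Pi.single σ 1) a b := by
  obtain ⟨t, i, j⟩ := a
  obtain ⟨t', i', k⟩ := b
  simp only [pqEntry]
  split_ifs
  · refine fderiv_apply_eq_zero_of_forall_add_smul_eq fun x => ?_
    simp [hσ]
  · rw [((hasFDerivAt_apply _ w).add_const _).fderiv]
    simp
  all_goals simp

-- With 0-based indices, both sides are the entry of block `(t, i)` at offset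
-- `j - k₁ - k₂ - 1` (zero when this is negative).
theorem pqEntry_shift_comm (w : Idx15 p s n d → ℂ) (a b b' : PQIdx p s n) :
    pqEntry p s n d 0 0 (Sum.elim (fun e => pqEntry p s n d c f w e b) 0) a b'
      = pqEntry p s n d 0 0 (Sum.elim (fun e => pqEntry p s n d c f w e b') 0) a b := by
  obtain ⟨t, i, j⟩ := a
  obtain ⟨t₁, i₁, k₁⟩ := b
  obtain ⟨t₂, i₂, k₂⟩ := b'
  by_cases h₁ : (⟨t, i⟩ : Σ t, Fin (s t)) = ⟨t₁, i₁⟩ <;>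
    by_cases h₂ : (⟨t, i⟩ : Σ t, Fin (s t)) = ⟨t₂, i₂⟩
  · cases h₁
    cases h₂
    simp only [pqEntry, if_true]
    split_ifs <;> simp only [Sum.elim_inl, Pi.zero_apply, add_zero, if_true] <;> split_ifs
    all_goals first | rfl | omega |
      (congr 1 <;> [congr 4; congr 1] <;> simp only [Fin.mk.injEq] <;> omega)
  · cases h₁
    simp only [pqEntry, if_neg h₂]
    split_ifs <;> simp_all
  · cases h₂
    simp only [pqEntry, if_neg h₁]
    split_ifs <;> simp_all
  · simp only [pqEntry, if_neg h₁, if_neg h₂]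

theorem Pi15_inr_inr_left (w : Idx15 p s n d → ℂ) (z : Fin d) (u : Idx15 p s n d) :
    Pi15 p s n d c f w (Sum.inr (Sum.inr z)) u = 0 := by
  rcases u with a | b | z' <;> rfl

theorem Pi15_zero_zero_single_inr (x : PQIdx p s n ⊕ Fin d) (u v : Idx15 p s n d) :
    Pi15 p s n d 0 0 (Pi.single (Sum.inr x) 1) u v = 0 := by
  rcases u with a | b | z <;> rcases v with a' | b' | z' <;>
    simp [Pi15, pqEntry_zero_zero_of_forall_inl_eq_zero]

theorem sum_mul_Pi15_single (y : PQIdx p s n → ℂ) (u v : Idx15 p s n d) :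
    ∑ e, y e * Pi15 p s n d 0 0 (Pi.single (Sum.inl e) 1) u v
      = Pi15 p s n d 0 0 (Sum.elim y 0) u v := by
  rcases u with a | b | z <;> rcases v with a' | b' | z' <;>
    simp [Pi15, sum_mul_pqEntry_single]

theorem fderiv_Pi15_apply_single (w : Idx15 p s n d → ℂ) (u v : Idx15 p s n d)
    {σ : Idx15 p s n d} (hσ : ∀ z, σ ≠ Sum.inr (Sum.inr z)) :
    fderiv ℂ (fun w' => Pi15 p s n d c f w' u v) w (Pi.single σ 1)
      = Pi15 p s n d 0 0 (Pi.single σ 1) u v := by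
  rcases u with a | b | z <;> rcases v with a' | b' | z'
  all_goals simp [Pi15, fderiv_pqEntry_apply_single w _ _ hσ]

theorem cyclic_sum_Pi15_linear_eq_zero (w : Idx15 p s n d → ℂ) (u v r : Idx15 p s n d) :
    Pi15 p s n d 0 0 (Sum.elim (fun e => Pi15 p s n d c f w (Sum.inl e) u) 0) v r
      + Pi15 p s n d 0 0 (Sum.elim (fun e => Pi15 p s n d c f w (Sum.inl e) v) 0) r u
      + Pi15 p s n d 0 0 (Sum.elim (fun e => Pi15 p s n d c f w (Sum.inl e) r) 0) u v = 0 := by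
  have h₀ : ∀ a b, pqEntry p s n d 0 0 (Sum.elim (fun _ => 0) 0) a b = 0 :=
    pqEntry_zero_zero_of_forall_inl_eq_zero fun _ => rfl
  rcases u with a₁ | b₁ | z₁ <;> rcases v with a₂ | b₂ | z₂ <;> rcases r with a₃ | b₃ | z₃ <;>
    simp [Pi15, h₀, pqEntry_shift_comm]

end

theorem stmt_15_general (p : ℕ) (s : Fin p → ℕ)
    (n : (t : Fin p) → Fin (s t) → ℕ)
    (d : ℕ) (c : (t : Fin p) → (i : Fin (s t)) → Fin (n t i) → ℂ)
    (f : Fin p → (Fin d → ℂ) → ℂ) :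
    ∀ (w : Idx15 p s n d → ℂ) (u v r : Idx15 p s n d),
      ∑ σ : Idx15 p s n d,
        (Pi15 p s n d c f w σ u *
            fderiv ℂ (fun w' => Pi15 p s n d c f w' v r) w (Pi.single σ 1)
          + Pi15 p s n d c f w σ v *
            fderiv ℂ (fun w' => Pi15 p s n d c f w' r u) w (Pi.single σ 1)
          + Pi15 p s n d c f w σ r *
            fderiv ℂ (fun w' => Pi15 p s n d c f w' u v) w (Pi.single σ 1)) = 0 := by
  intro w u v r
  simp only [Fintype.sum_sum_type, Pi15_inr_inr_left, zero_mul, add_zero, sum_const_zero]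
  simp (disch := simp) only [fderiv_Pi15_apply_single, Pi15_zero_zero_single_inr, mul_zero,
    add_zero, sum_const_zero, sum_add_distrib, sum_mul_Pi15_single]
  exact cyclic_sum_Pi15_linear_eq_zero w u v r

/-- Proposition 5.3: the bracket `{p^i_{t,j}, q^i_{t,k}} = p^i_{t,j−k} + c^i_{t,j−k}`
for `j > k`, `= f_t(z)` for `j = k`, with all other brackets of coordinates zero,
satisfies the Jacobi identity of a Poisson structure. -/
theorem stmt_15 (p : ℕ) (hp : 1 ≤ p) (s : Fin p → ℕ) (hs : ∀ t, 1 ≤ s t)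
    (n : (t : Fin p) → Fin (s t) → ℕ) (hn : ∀ t i, 1 ≤ n t i)
    (d : ℕ) (c : (t : Fin p) → (i : Fin (s t)) → Fin (n t i) → ℂ)
    (f : Fin p → (Fin d → ℂ) → ℂ) (hf : ∀ t, Differentiable ℂ (f t)) :
    ∀ (w : Idx15 p s n d → ℂ) (u v r : Idx15 p s n d),
      ∑ σ : Idx15 p s n d,
        (Pi15 p s n d c f w σ u *
            fderiv ℂ (fun w' => Pi15 p s n d c f w' v r) w (Pi.single σ 1)
          + Pi15 p s n d c f w σ v *
            fderiv ℂ (fun w' => Pi15 p s n d c f w' r u) w (Pi.single σ 1)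
          + Pi15 p s n d c f w σ r *
            fderiv ℂ (fun w' => Pi15 p s n d c f w' u v) w (Pi.single σ 1)) = 0 :=
  stmt_15_general p s n d c f
end

section
/- Let n ≥ 1 and let f, gter be nonzero homogeneous polynomials in n complex variables of degrees a ≥ 1 and b ≥ 1 respectively (write g for the second one). Assume that their differentials are everywhere linearly dependent, i.e. ∂ᵢf · ∂ⱼg = ∂ⱼf · ∂ᵢg as polynomials for all i, j ∈ Fin n. Then there exist a homogeneous polynomial p, nonzero constants c₁, c₂ ∈ ℂ, and positive integers k₁, k₂ such that f = c₁ • p^{k₁} and g = c₂ • p^{k₂}. (The content of Proposition 10.8 of the paper: for a Lie algebra of index 1 any two homogeneous invariants are, up to scalars, powers of a common polynomial, whence the algebra of invariants ℂ[𝔤]^𝔤 is a polynomial ring ℂ[p].) -/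
/-!
Euler's identity turns the dependence of the gradients into `b g ∂ᵢf = a f ∂ᵢg`, so all partial
derivatives of the rational function `f ^ b / g ^ a` vanish. Writing `f ^ b = D F₁` and
`g ^ a = D G₁` with `F₁`, `G₁` coprime, each of `F₁`, `G₁` divides its own partial derivatives;
as factors of homogeneous polynomials they are homogeneous, hence constant, so `f ^ b` and `g ^ a`
are associated. In a UFD this forces `f` and `g` to be associated to powers of a common `p`
(Euclid's algorithm on the exponents), and `p` is homogeneous because a power of it is.
-/

open Finsupp MvPolynomial

namespace MvPolynomial

section Homogeneous

variable {σ R : Type*}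

theorem homogeneousComponent_mul_of_le_degree [CommSemiring R] {F G : MvPolynomial σ R}
    {k l : ℕ} (hF : ∀ u ∈ F.support, k ≤ u.degree) (hG : ∀ v ∈ G.support, l ≤ v.degree) :
    homogeneousComponent (k + l) (F * G) =
      homogeneousComponent k F * homogeneousComponent l G := by
  classical
  ext d
  rw [coeff_homogeneousComponent]
  split_ifs with hd
  · rw [coeff_mul, coeff_mul]
    refine Finset.sum_congr rfl fun x hx => ?_
    rw [Finset.HasAntidiagonal.mem_antidiagonal] at hx
    rw [← hx, map_add] at hd
    simp only [coeff_homogeneousComponent]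
    rcases trichotomy_of_add_eq_add hd with h | h | h
    · rw [if_pos h.1, if_pos h.2]
    · rw [if_neg h.ne, zero_mul, notMem_support_iff.mp fun hu => (hF _ hu).not_gt h, zero_mul]
    · rw [if_neg h.ne, mul_zero, notMem_support_iff.mp fun hv => (hG _ hv).not_gt h, mul_zero]
  · exact (((homogeneousComponent_isHomogeneous k F).mul
      (homogeneousComponent_isHomogeneous l G)).coeff_eq_zero hd).symm

theorem IsHomogeneous.of_mul_left [CommRing R] [IsDomain R] {F G : MvPolynomial σ R} {N : ℕ}
    (h : (F * G).IsHomogeneous N) (hG : G ≠ 0) : F.IsHomogeneous F.totalDegree := by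
  rcases eq_or_ne F 0 with rfl | hF
  · exact isHomogeneous_zero _ _ _
  obtain ⟨u, hu, hu_min⟩ := F.support.exists_min_image degree (support_nonempty.mpr hF)
  obtain ⟨v, hv, hv_min⟩ := G.support.exists_min_image degree (support_nonempty.mpr hG)
  have hcomp_ne : homogeneousComponent (u.degree + v.degree) (F * G) ≠ 0 := by
    rw [homogeneousComponent_mul_of_le_degree hu_min hv_min]
    refine mul_ne_zero (fun h0 => mem_support_iff.mp hu ?_) (fun h0 => mem_support_iff.mp hv ?_)
    · simpa [coeff_homogeneousComponent] using congrArg (coeff u) h0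
    · simpa [coeff_homogeneousComponent] using congrArg (coeff v) h0
  have hlow : u.degree + v.degree = N := by
    by_contra hne
    rw [homogeneousComponent_of_mem ((mem_homogeneousSubmodule _ _).mpr h), if_neg hne] at hcomp_ne
    exact hcomp_ne rfl
  have htop : F.totalDegree + G.totalDegree = N := by
    rw [← totalDegree_mul_of_isDomain hF hG, h.totalDegree (mul_ne_zero hF hG)]
  have hv_le : v.degree ≤ G.totalDegree := le_totalDegree hv
  intro d hd
  have h1 : u.degree ≤ d.degree := hu_min d (mem_support_iff.mpr hd)
  have h2 : d.degree ≤ F.totalDegree := le_totalDegree (mem_support_iff.mpr hd)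
  rw [Pi.one_def, ← degree_eq_weight_one]
  omega

theorem IsHomogeneous.of_pow [CommRing R] [IsDomain R] {F : MvPolynomial σ R} {N k : ℕ}
    (h : (F ^ k).IsHomogeneous N) (hk : 0 < k) : F.IsHomogeneous F.totalDegree := by
  rcases eq_or_ne F 0 with rfl | hF
  · exact isHomogeneous_zero _ _ _
  rw [← Nat.succ_pred_eq_of_pos hk, pow_succ'] at h
  exact h.of_mul_left (pow_ne_zero _ hF)

end Homogeneous

section Derivative

variable {σ R : Type*}

theorem IsHomogeneous.pderiv_eq_zero_of_dvd [CommRing R] [IsDomain R] {F : MvPolynomial σ R}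
    {m : ℕ} (hF : F.IsHomogeneous m) {i : σ} (h : F ∣ pderiv i F) : pderiv i F = 0 := by
  by_contra hne
  obtain ⟨t, ht⟩ := h
  have ht0 : t ≠ 0 := by rintro rfl; exact hne (by rw [ht, mul_zero])
  have hF0 : F ≠ 0 := by rintro rfl; exact hne (by rw [ht, zero_mul])
  -- `pderiv i F` has degree `m - 1`, while the multiple `F * t` has degree at least `m`.
  have hdeg := (hF.pderiv (i := i)).totalDegree hne
  rw [ht, totalDegree_mul_of_isDomain hF0 ht0, hF.totalDegree hF0] at hdeg
  obtain rfl : m = 0 := by omega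
  rw [← totalDegree_zero_iff_isHomogeneous, totalDegree_eq_zero_iff_eq_C] at hF
  exact hne (by rw [hF, pderiv_C])

theorem IsHomogeneous.exists_eq_C_of_forall_dvd_pderiv [Fintype σ] [CommRing R] [IsDomain R]
    [CharZero R] {F : MvPolynomial σ R} {m : ℕ} (hF : F.IsHomogeneous m)
    (h : ∀ i, F ∣ pderiv i F) : ∃ c, F = C c := by
  have hEuler := hF.sum_X_mul_pderiv
  simp only [fun i => hF.pderiv_eq_zero_of_dvd (h i), mul_zero, Finset.sum_const_zero] at hEuler
  rcases (smul_eq_zero.mp hEuler.symm) with rfl | rfl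
  · exact ⟨_, totalDegree_eq_zero_iff_eq_C.mp ((totalDegree_zero_iff_isHomogeneous σ).mpr hF)⟩
  · exact ⟨0, C_0.symm⟩

theorem IsHomogeneous.associated_of_pderiv_mul_eq [Fintype σ] [Field R] [CharZero R]
    {F G : MvPolynomial σ R} {m m' : ℕ} (hF : F.IsHomogeneous m) (hG : G.IsHomogeneous m')
    (hF0 : F ≠ 0) (hG0 : G ≠ 0) (h : ∀ i, pderiv i F * G = F * pderiv i G) : Associated F G := by
  obtain ⟨F₁, G₁, D, hrel, rfl, rfl⟩ := UniqueFactorizationMonoid.exists_reduced_factors F hF0 G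
  have hD0 : D ≠ 0 := left_ne_zero_of_mul hF0
  have h₁ : ∀ i, pderiv i F₁ * G₁ = F₁ * pderiv i G₁ := fun i => by
    have hi := h i
    simp only [Derivation.leibniz, smul_eq_mul] at hi
    refine mul_left_cancel₀ (pow_ne_zero 2 hD0) ?_
    linear_combination hi
  have isUnit_of_dvd_pderiv {P : MvPolynomial σ R} {k : ℕ} (hP : (D * P).IsHomogeneous k)
      (hP0 : P ≠ 0) (hdvd : ∀ i, P ∣ pderiv i P) : IsUnit P := by
    rw [mul_comm] at hP
    obtain ⟨c, rfl⟩ := (hP.of_mul_left hD0).exists_eq_C_of_forall_dvd_pderiv hdvd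
    exact (Ne.isUnit fun hc => hP0 (by rw [hc, C_0])).map C
  have hF₁ := isUnit_of_dvd_pderiv hF (right_ne_zero_of_mul hF0) fun i =>
    hrel.dvd_of_dvd_mul_right ⟨_, h₁ i⟩
  have hG₁ := isUnit_of_dvd_pderiv hG (right_ne_zero_of_mul hG0) fun i =>
    hrel.symm.dvd_of_dvd_mul_left ⟨_, (h₁ i).symm.trans (mul_comm _ _)⟩
  exact (associated_mul_unit_right D F₁ hF₁).symm.trans (associated_mul_unit_right D G₁ hG₁)

end Derivative

section Gradients

variable {σ R : Type*} [Fintype σ] [CommRing R] {f g : MvPolynomial σ R} {a b : ℕ}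

theorem IsHomogeneous.nsmul_mul_pderiv_eq (hf : f.IsHomogeneous a) (hg : g.IsHomogeneous b)
    (hdep : ∀ i j, pderiv i f * pderiv j g = pderiv j f * pderiv i g) (i : σ) :
    b • (g * pderiv i f) = a • (f * pderiv i g) := by
  rw [← smul_mul_assoc, ← smul_mul_assoc, ← hf.sum_X_mul_pderiv, ← hg.sum_X_mul_pderiv,
    Finset.sum_mul, Finset.sum_mul]
  refine Finset.sum_congr rfl fun j _ => ?_
  linear_combination X j * hdep i j

theorem IsHomogeneous.pderiv_pow_mul_pow_eq (hf : f.IsHomogeneous a) (hg : g.IsHomogeneous b)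
    (ha : 0 < a) (hb : 0 < b) (hdep : ∀ i j, pderiv i f * pderiv j g = pderiv j f * pderiv i g)
    (i : σ) : pderiv i (f ^ b) * g ^ a = f ^ b * pderiv i (g ^ a) := by
  obtain ⟨a, rfl⟩ := Nat.exists_eq_add_one_of_ne_zero ha.ne'
  obtain ⟨b, rfl⟩ := Nat.exists_eq_add_one_of_ne_zero hb.ne'
  have key := hf.nsmul_mul_pderiv_eq hg hdep i
  simp only [nsmul_eq_mul] at key
  simp only [pderiv_pow, Nat.add_sub_cancel]
  linear_combination f ^ b * g ^ a * key

end Gradients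

theorem exists_eq_smul_of_associated {σ K : Type*} [Field K] {f q : MvPolynomial σ K}
    (h : Associated f q) : ∃ c : K, c ≠ 0 ∧ f = c • q := by
  obtain ⟨u, hu⟩ := h.symm
  obtain ⟨c, hc, hcu⟩ := isUnit_iff_eq_C_of_isReduced.mp u.isUnit
  exact ⟨c, hc.ne_zero, by rw [← hu, hcu, smul_eq_C_mul, mul_comm]⟩

end MvPolynomial

theorem exists_associated_pow_of_associated_pow_pow {α : Type*} [CommMonoidWithZero α]
    [UniqueFactorizationMonoid α] {f g : α} {a b : ℕ} (ha : 0 < a) (hb : 0 < b) (hf : f ≠ 0)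
    (h : Associated (f ^ b) (g ^ a)) :
    ∃ p k₁ k₂, 0 < k₁ ∧ 0 < k₂ ∧ Associated f (p ^ k₁) ∧ Associated g (p ^ k₂) := by
  induction hab : a + b using Nat.strong_induction_on generalizing f g a b with
  | _ N ih => ?_
  have hg : g ≠ 0 := by
    rintro rfl
    exact pow_ne_zero b hf (h.eq_zero_iff.mpr (zero_pow ha.ne'))
  wlog hle : a ≤ b generalizing f g a b
  · obtain ⟨p, k₂, k₁, hk₂, hk₁, hg', hf'⟩ :=
      this hb ha hg h.symm (by omega) hf (le_of_not_ge hle)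
    exact ⟨p, k₁, k₂, hk₁, hk₂, hf', hg'⟩
  rcases hle.eq_or_lt with rfl | hlt
  · have hfg := (UniqueFactorizationMonoid.pow_dvd_pow_iff_dvd ha.ne').mp h.dvd
    have hgf := (UniqueFactorizationMonoid.pow_dvd_pow_iff_dvd ha.ne').mp h.symm.dvd
    exact ⟨f, 1, 1, one_pos, one_pos, by rw [pow_one],
      by rw [pow_one]; exact (associated_of_dvd_dvd hfg hgf).symm⟩
  -- Euclid's algorithm on the exponents: `f ∣ g`, and the cofactor satisfies a smaller relation.
  obtain ⟨h', rfl⟩ := (UniqueFactorizationMonoid.pow_dvd_pow_iff_dvd hb.ne').mp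
    (h.dvd.trans (pow_dvd_pow g hle))
  have hcofactor : Associated (f ^ (b - a)) (h' ^ a) := by
    rw [← Nat.add_sub_cancel' hle, pow_add, mul_pow] at h
    exact h.of_mul_left (Associated.refl _) (pow_ne_zero a hf)
  obtain ⟨p, k₁, k₂, hk₁, hk₂, hfp, hh'p⟩ :=
    ih b (by omega) ha (Nat.sub_pos_of_lt hlt) hf hcofactor (by omega)
  exact ⟨p, k₁, k₁ + k₂, hk₁, by omega, hfp, by rw [pow_add]; exact hfp.mul_mul hh'p⟩

theorem stmt_17_general (n : ℕ) (f g : MvPolynomial (Fin n) ℂ)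
    (hf : f ≠ 0) (hg : g ≠ 0) (a b : ℕ) (ha : 1 ≤ a) (hb : 1 ≤ b)
    (hfh : f.IsHomogeneous a) (hgh : g.IsHomogeneous b)
    (hdep : ∀ i j : Fin n,
      MvPolynomial.pderiv i f * MvPolynomial.pderiv j g =
      MvPolynomial.pderiv j f * MvPolynomial.pderiv i g) :
    ∃ (p : MvPolynomial (Fin n) ℂ) (e : ℕ) (c₁ c₂ : ℂ) (k₁ k₂ : ℕ),
      p.IsHomogeneous e ∧ c₁ ≠ 0 ∧ c₂ ≠ 0 ∧ 0 < k₁ ∧ 0 < k₂ ∧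
      f = c₁ • p ^ k₁ ∧ g = c₂ • p ^ k₂ := by
  have hassoc : Associated (f ^ b) (g ^ a) :=
    (hfh.pow b).associated_of_pderiv_mul_eq (hgh.pow a) (pow_ne_zero b hf) (pow_ne_zero a hg)
      (hfh.pderiv_pow_mul_pow_eq hgh ha hb hdep)
  obtain ⟨p, k₁, k₂, hk₁, hk₂, hfp, hgp⟩ :=
    exists_associated_pow_of_associated_pow_pow ha hb hf hassoc
  obtain ⟨c₁, hc₁, rfl⟩ := exists_eq_smul_of_associated hfp
  obtain ⟨c₂, hc₂, rfl⟩ := exists_eq_smul_of_associated hgp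
  have hpow : (p ^ k₁).IsHomogeneous a := by
    simpa [smul_eq_C_mul, ← mul_assoc, ← C_mul, hc₁] using hfh.C_mul c₁⁻¹
  exact ⟨p, _, c₁, c₂, k₁, k₂, hpow.of_pow hk₁, hc₁, hc₂, hk₁, hk₂, rfl, rfl⟩

/-- Proposition 10.8: two nonzero homogeneous polynomials `f`, `g` of degrees
`a`, `b ≥ 1` with everywhere linearly dependent differentials are, up to nonzero
scalars, positive powers of a common homogeneous polynomial `p`. -/
theorem stmt_17 (n : ℕ) (hn : 1 ≤ n) (f g : MvPolynomial (Fin n) ℂ)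
    (hf : f ≠ 0) (hg : g ≠ 0) (a b : ℕ) (ha : 1 ≤ a) (hb : 1 ≤ b)
    (hfh : f.IsHomogeneous a) (hgh : g.IsHomogeneous b)
    (hdep : ∀ i j : Fin n,
      MvPolynomial.pderiv i f * MvPolynomial.pderiv j g =
      MvPolynomial.pderiv j f * MvPolynomial.pderiv i g) :
    ∃ (p : MvPolynomial (Fin n) ℂ) (e : ℕ) (c₁ c₂ : ℂ) (k₁ k₂ : ℕ),
      p.IsHomogeneous e ∧ c₁ ≠ 0 ∧ c₂ ≠ 0 ∧ 0 < k₁ ∧ 0 < k₂ ∧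
      f = c₁ • p ^ k₁ ∧ g = c₂ • p ^ k₂ :=
  stmt_17_general n f g hf hg a b ha hb hfh hgh hdep
end
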